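/- arXiv:2206.15092 — 4 statements merged into one kernel-verified Lean document; each statement's English description precedes it below -/
import Mathlib

section
/- For every positive integer q, a graph G is K_{2,q}-induced-minor-free if and only if every minimal separator S of G induces a subgraph G[S] with independence number strictly less than q. -/
open SimpleGraph

/-! ## Common definitions -/

variable {V : Type} {W : Type}

/-- `G.HasInducedMinor H` : `H` is an induced minor of `G`, witnessed by an induced minor
model: pairwise disjoint nonempty connected branch sets `X w ⊆ V(G)` such that for distinct
`w₁ w₂` there is an edge of `G` between `X w₁` and `X w₂` iff `w₁w₂ ∈ E(H)`. -/
def SimpleGraph.HasInducedMinor (G : SimpleGraph V) (H : SimpleGraph W) : Prop :=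
  ∃ X : W → Set V,
    (∀ w, (G.induce (X w)).Connected) ∧
    (Pairwise fun w₁ w₂ => Disjoint (X w₁) (X w₂)) ∧
    ∀ w₁ w₂, w₁ ≠ w₂ →
      (H.Adj w₁ w₂ ↔ ∃ v₁ ∈ X w₁, ∃ v₂ ∈ X w₂, G.Adj v₁ v₂)

/-- `G.HasMinor H` : `H` is a minor of `G`, witnessed by a minor model. -/
def SimpleGraph.HasMinor (G : SimpleGraph V) (H : SimpleGraph W) : Prop :=
  ∃ X : W → Set V,
    (∀ w, (G.induce (X w)).Connected) ∧
    (Pairwise fun w₁ w₂ => Disjoint (X w₁) (X w₂)) ∧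
    ∀ w₁ w₂, H.Adj w₁ w₂ → ∃ v₁ ∈ X w₁, ∃ v₂ ∈ X w₂, G.Adj v₁ v₂

/-- `S` is a `u,v`-separator in `G` : `u, v ∉ S` and every walk from `u` to `v` in `G`
meets `S` (i.e. `u` and `v` lie in different components of `G - S`). -/
def SimpleGraph.IsSeparator (G : SimpleGraph V) (u v : V) (S : Set V) : Prop :=
  u ∉ S ∧ v ∉ S ∧ ∀ p : G.Walk u v, ∃ x ∈ p.support, x ∈ S

/-- A minimal separator of `G`: an inclusion-minimal `u,v`-separator for some
non-adjacent pair of distinct vertices `u, v`. -/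
def SimpleGraph.IsMinimalSeparator (G : SimpleGraph V) (S : Set V) : Prop :=
  ∃ u v : V, u ≠ v ∧ ¬ G.Adj u v ∧ G.IsSeparator u v S ∧
    ∀ S' ⊂ S, ¬ G.IsSeparator u v S'

/-- The independence number of the subgraph of `G` induced by the set `A`:
the largest size of a finite set of pairwise non-adjacent vertices inside `A`. -/
noncomputable def SimpleGraph.indepNumOn (G : SimpleGraph V) (A : Set V) : ℕ :=
  sSup {n | ∃ s : Finset V, ↑s ⊆ A ∧ (∀ u ∈ s, ∀ v ∈ s, u ≠ v → ¬ G.Adj u v) ∧ s.card = n}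

/-- A tree decomposition of a graph `G`. -/
structure SimpleGraph.TreeDecomp (G : SimpleGraph V) where
  ι : Type
  tree : SimpleGraph ι
  isTree : tree.IsTree
  bag : ι → Set V
  bags_cover_vertices : ∀ v : V, ∃ t, v ∈ bag t
  bags_cover_edges : ∀ ⦃u v : V⦄, G.Adj u v → ∃ t, u ∈ bag t ∧ v ∈ bag t
  bags_connected : ∀ v : V, (tree.induce {t | v ∈ bag t}).Connected

/-- The independence number of a tree decomposition: the maximum, over all bags,
of the independence number of the subgraph induced by the bag. -/
noncomputable def SimpleGraph.TreeDecomp.indepNum {G : SimpleGraph V} (D : G.TreeDecomp) : ℕ∞ :=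
  ⨆ t : D.ι, (G.indepNumOn (D.bag t) : ℕ∞)

/-- The tree-independence number of `G`: the minimum independence number of
a tree decomposition of `G`. -/
noncomputable def SimpleGraph.treeIndepNum (G : SimpleGraph V) : ℕ∞ :=
  ⨅ D : G.TreeDecomp, D.indepNum

/-- The width of a tree decomposition: the maximum of `|X_t| - 1` over all bags. -/
noncomputable def SimpleGraph.TreeDecomp.width {G : SimpleGraph V} (D : G.TreeDecomp) : ℕ∞ :=
  ⨆ t : D.ι, (((D.bag t).ncard - 1 : ℕ) : ℕ∞)

/-- The treewidth of `G`. -/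
noncomputable def SimpleGraph.treewidth (G : SimpleGraph V) : ℕ∞ :=
  ⨅ D : G.TreeDecomp, D.width

/-- A graph is chordal if it has no induced cycle of length at least `4`. -/
def SimpleGraph.IsChordal (G : SimpleGraph V) : Prop :=
  ∀ n : ℕ, 4 ≤ n → ∀ A : Set V, ¬ Nonempty (cycleGraph n ≃g G.induce A)

/-- `H` is a minimal triangulation of `G`: a chordal supergraph of `G` on the same
vertex set such that no chordal graph lies strictly between `G` and `H`. -/
def SimpleGraph.IsMinimalTriangulation (G H : SimpleGraph V) : Prop :=
  G ≤ H ∧ H.IsChordal ∧ ∀ H' : SimpleGraph V, G ≤ H' → H'.IsChordal → ¬ H' < H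

/-- `X` is a potential maximal clique of `G`: a maximal clique in some
minimal triangulation of `G`. -/
def SimpleGraph.IsPotentialMaxClique (G : SimpleGraph V) (X : Set V) : Prop :=
  ∃ H : SimpleGraph V, G.IsMinimalTriangulation H ∧
    H.IsClique X ∧ ∀ Y : Set V, H.IsClique Y → X ⊆ Y → Y = X

/-- The pmc-independence number of `G`: the maximum independence number of a subgraph
of `G` induced by a potential maximal clique of `G`. -/
noncomputable def SimpleGraph.pmcIndepNum (G : SimpleGraph V) : ℕ :=
  sSup {n | ∃ X : Set V, G.IsPotentialMaxClique X ∧ n = G.indepNumOn X}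

/-- The maximum size of a minimal separator of `G` (`0` if `G` has no minimal separator). -/
noncomputable def SimpleGraph.maxMinimalSeparatorSize (G : SimpleGraph V) : ℕ :=
  sSup {n | ∃ S : Set V, G.IsMinimalSeparator S ∧ n = S.ncard}

/-- `G` is `k`-connected: `G` has at least `k+1` vertices and removing any set of fewer
than `k` vertices leaves a connected graph. -/
def SimpleGraph.IsKConnected (G : SimpleGraph V) [Fintype V] (k : ℕ) : Prop :=
  k + 1 ≤ Fintype.card V ∧
    ∀ X : Finset V, X.card < k → (G.induce ((↑X : Set V)ᶜ)).Connected

/-- The `n`-wheel `W_n`: the cycle `C_n` together with a universal vertex. -/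
def wheelGraph (n : ℕ) : SimpleGraph (Option (Fin n)) :=
  SimpleGraph.fromRel (fun a b =>
    a = none ∨ ∃ i j : Fin n, a = some i ∧ b = some j ∧ (cycleGraph n).Adj i j)

/-- `K₅⁻`: the complete graph on `5` vertices minus an edge. -/
def K5minus : SimpleGraph (Fin 5) := (completeGraph (Fin 5)).deleteEdges {s(0, 1)}

/-- The complete bipartite graph `K_{2,q}`. -/
abbrev K2q (q : ℕ) : SimpleGraph (Fin 2 ⊕ Fin q) := completeBipartiteGraph (Fin 2) (Fin q)

/-- The Hadwiger number of `G`: the largest `p` such that `K_p` is a minor of `G`. -/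
noncomputable def SimpleGraph.hadwigerNumber (G : SimpleGraph V) : ℕ :=
  sSup {p | G.HasMinor (completeGraph (Fin p))}

/-!
The components `C_u ∋ u` and `C_v ∋ v` of `G - S` for a minimal `u,v`-separator `S` are full:
every vertex of `S` has a neighbour in each. Contracting `C_u` and `C_v` and keeping an
independent `q`-subset of `S` gives an induced `K_{2,q}`. Conversely, if `A, B` are the branch sets
of the two-vertex side of an induced `K_{2,q}` model, the vertices outside `A ∪ B` separate `A`
from `B` and contain a minimal separator `T`; every other branch set is connected and touches both
`A` and `B`, so it meets `T`, and one vertex from each is an independent `q`-set in `T`.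
-/

namespace SimpleGraph

variable {G : SimpleGraph V}

theorem le_indepNumOn_iff [Finite V] {A : Set V} {q : ℕ} :
    q ≤ G.indepNumOn A ↔
      ∃ f : Fin q ↪ V, (∀ j, f j ∈ A) ∧ Pairwise fun i j => ¬ G.Adj (f i) (f j) := by
  have := Fintype.ofFinite V
  set N := {n | ∃ s : Finset V, ↑s ⊆ A ∧
      (∀ u ∈ s, ∀ v ∈ s, u ≠ v → ¬ G.Adj u v) ∧ s.card = n}
  have hbdd : BddAbove N :=
    ⟨Fintype.card V, by rintro _ ⟨s, -, -, rfl⟩; exact s.card_le_univ⟩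
  constructor
  · intro hq
    obtain ⟨s, hsA, hs, hcard⟩ := Nat.sSup_mem (s := N) ⟨0, ∅, by simp⟩ hbdd
    let f : Fin q ↪ V := (Fin.castLEEmb (hcard ▸ hq)).trans
      (s.equivFin.symm.toEmbedding.trans (Function.Embedding.subtype _))
    refine ⟨f, fun j => hsA (Subtype.prop _), fun i j hij => hs _ (Subtype.prop _) _
      (Subtype.prop _) (f.injective.ne hij)⟩
  · rintro ⟨f, hfA, hf⟩
    refine le_csSup hbdd ⟨Finset.univ.map f, ?_, ?_, by simp⟩
    · simpa [Set.subset_def] using hfA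
    · simp only [Finset.mem_map, Finset.mem_univ, true_and]
      rintro _ ⟨i, rfl⟩ _ ⟨j, rfl⟩ hij
      exact hf (fun h => hij (h ▸ rfl))

namespace ConnectedComponent

variable {s : Set V} (K : (G.induce s).ConnectedComponent)

theorem connected_induce_image_val_supp : (G.induce (Subtype.val '' K.supp)).Connected := by
  let f : K.toSimpleGraph →g G.induce (Subtype.val '' K.supp) :=
    { toFun := fun x => ⟨x.1.1, x.1, x.2, rfl⟩, map_rel' := id }
  refine K.connected_toSimpleGraph.map f ?_
  rintro ⟨_, x, hx, rfl⟩
  exact ⟨⟨x, hx⟩, rfl⟩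

theorem mem_image_val_supp_of_adj {x y : V} (hx : x ∈ Subtype.val '' K.supp) (hy : y ∈ s)
    (hxy : G.Adj x y) : y ∈ Subtype.val '' K.supp := by
  obtain ⟨x, hxK, rfl⟩ := hx
  exact ⟨⟨y, hy⟩, K.mem_supp_of_adj_mem_supp hxK hxy, rfl⟩

end ConnectedComponent

namespace IsSeparator

variable {u v : V} {S : Set V}

theorem symm (h : G.IsSeparator u v S) : G.IsSeparator v u S := by
  refine ⟨h.2.1, h.1, fun p => ?_⟩
  obtain ⟨x, hx, hxS⟩ := h.2.2 p.reverse
  exact ⟨x, by simpa using hx, hxS⟩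

theorem inter_nonempty_of_connected (h : G.IsSeparator u v S) {C : Set V}
    (hC : (G.induce C).Connected) (hu : u ∈ C) (hv : v ∈ C) : (C ∩ S).Nonempty := by
  obtain ⟨p⟩ := hC.preconnected ⟨u, hu⟩ ⟨v, hv⟩
  obtain ⟨x, hx, hxS⟩ := h.2.2 (p.map (Embedding.induce C).toHom)
  obtain ⟨y, -, rfl⟩ := List.mem_map.1 ((p.support_map _) ▸ hx)
  exact ⟨y, y.2, hxS⟩

theorem notMem_image_val_supp (h : G.IsSeparator u v S) (K : (G.induce Sᶜ).ConnectedComponent)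
    (hu : u ∈ Subtype.val '' K.supp) : v ∉ Subtype.val '' K.supp := fun hv => by
  obtain ⟨_, ⟨x, -, rfl⟩, hxS⟩ :=
    h.inter_nonempty_of_connected K.connected_induce_image_val_supp hu hv
  exact x.2 hxS

/-- The vertex `s` is where a `u,v`-walk avoiding `S \ {s}` leaves the component of `u`. -/
theorem exists_adj_of_minimal (h : G.IsSeparator u v S)
    (hmin : ∀ S' ⊂ S, ¬ G.IsSeparator u v S') {s : V} (hs : s ∈ S)
    (K : (G.induce Sᶜ).ConnectedComponent) (hu : u ∈ Subtype.val '' K.supp) :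
    ∃ x ∈ Subtype.val '' K.supp, G.Adj x s := by
  have hsep := hmin _ (Set.sdiff_singleton_ssubset.2 hs)
  simp only [IsSeparator, not_and] at hsep
  obtain ⟨p, hp⟩ : ∃ p : G.Walk u v, ∀ x ∈ p.support, x ∉ S \ {s} := by
    by_contra! hp
    exact hsep (fun h' => h.1 h'.1) (fun h' => h.2.1 h'.1) hp
  obtain ⟨d, hd, hdK, hdK'⟩ := p.exists_boundary_dart _ hu (h.notMem_image_val_supp K hu)
  have hdS : d.snd ∈ S := by
    by_contra hdS
    exact hdK' (K.mem_image_val_supp_of_adj hdK hdS d.adj)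
  have : d.snd = s := by
    by_contra hne
    exact hp _ (p.dart_snd_mem_support_of_mem_darts hd) ⟨hdS, hne⟩
  exact ⟨d.fst, hdK, this ▸ d.adj⟩

end IsSeparator

theorem isSeparator_compl_union {A B : Set V} (hAB : Disjoint A B)
    (hnadj : ∀ a ∈ A, ∀ b ∈ B, ¬ G.Adj a b) {u v : V} (hu : u ∈ A) (hv : v ∈ B) :
    G.IsSeparator u v (A ∪ B)ᶜ := by
  refine ⟨fun h => h (Or.inl hu), fun h => h (Or.inr hv), fun p => ?_⟩
  by_contra! hp
  obtain ⟨d, hd, hdA, hdA'⟩ := p.exists_boundary_dart A hu (hAB.notMem_of_mem_right hv)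
  have hdB : d.snd ∈ B :=
    (not_not.1 (hp _ (p.dart_snd_mem_support_of_mem_darts hd))).resolve_left hdA'
  exact hnadj _ hdA _ hdB d.adj

theorem exists_minimal_isSeparator_subset [Finite V] {u v : V} {S : Set V}
    (h : G.IsSeparator u v S) :
    ∃ T ⊆ S, G.IsSeparator u v T ∧ ∀ T' ⊂ T, ¬ G.IsSeparator u v T' := by
  obtain ⟨T, hTS, hT⟩ := exists_minimal_le_of_wellFoundedLT _ S h
  exact ⟨T, hTS, hT.prop, fun T' hT' hsep => hT.not_prop_of_lt hT' hsep⟩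

theorem hasInducedMinor_K2q_of_anticomplete {A B : Set V} (hA : (G.induce A).Connected)
    (hB : (G.induce B).Connected) (hAB : Disjoint A B)
    (hnadj : ∀ a ∈ A, ∀ b ∈ B, ¬ G.Adj a b)
    {q : ℕ} (f : Fin q ↪ V) (hf : Pairwise fun i j => ¬ G.Adj (f i) (f j))
    (hfA : ∀ j, f j ∉ A) (hfB : ∀ j, f j ∉ B)
    (hfA' : ∀ j, ∃ a ∈ A, G.Adj a (f j)) (hfB' : ∀ j, ∃ b ∈ B, G.Adj b (f j)) :
    G.HasInducedMinor (K2q q) := by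
  refine ⟨Sum.elim ![A, B] fun j => {f j}, ?_, ?_, ?_⟩
  · rintro (i | j)
    · fin_cases i
      exacts [hA, hB]
    · simp only [Sum.elim_inr]
      exact (connected_iff _).2 ⟨.of_subsingleton, ⟨⟨f j, rfl⟩⟩⟩
  · rintro (i | i) (j | j) hij
    · fin_cases i <;> fin_cases j <;> simp_all [Disjoint.symm]
    · fin_cases i <;> simp [hfA, hfB]
    · fin_cases j <;> simp [hfA, hfB]
    · simpa using f.injective.ne (by simpa using hij)
  · rintro (i | i) (j | j) hij
    · have hnadj' : ∀ b ∈ B, ∀ a ∈ A, ¬ G.Adj b a :=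
        fun b hb a ha h => hnadj a ha b hb h.symm
      fin_cases i <;> fin_cases j <;> simp_all
    · fin_cases i
      exacts [by simpa using hfA' j, by simpa using hfB' j]
    · fin_cases j
      exacts [by simpa [adj_comm] using hfA' i, by simpa [adj_comm] using hfB' i]
    · simpa using hf (by simpa using hij)

theorem IsMinimalSeparator.hasInducedMinor_K2q [Finite V] {S : Set V}
    (hS : G.IsMinimalSeparator S) {q : ℕ} (hq : q ≤ G.indepNumOn S) :
    G.HasInducedMinor (K2q q) := by
  obtain ⟨u, v, -, -, hsep, hmin⟩ := hS
  obtain ⟨f, hfS, hf⟩ := le_indepNumOn_iff.1 hq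
  set Ku := (G.induce Sᶜ).connectedComponentMk ⟨u, hsep.1⟩
  set Kv := (G.induce Sᶜ).connectedComponentMk ⟨v, hsep.2.1⟩
  have hu : u ∈ Subtype.val '' Ku.supp := ⟨_, rfl, rfl⟩
  have hv : v ∈ Subtype.val '' Kv.supp := ⟨_, rfl, rfl⟩
  have hdisj : Disjoint (Subtype.val '' Ku.supp) (Subtype.val '' Kv.supp) := by
    refine (Set.disjoint_image_iff Subtype.val_injective).2
      (pairwise_disjoint_supp_connectedComponent _ fun h => hsep.notMem_image_val_supp Ku hu ?_)
    exact h ▸ hv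
  have hnotS : ∀ (K : (G.induce Sᶜ).ConnectedComponent) j, f j ∉ Subtype.val '' K.supp := by
    rintro K j ⟨x, -, hx⟩
    exact x.2 (hx ▸ hfS j)
  refine hasInducedMinor_K2q_of_anticomplete Ku.connected_induce_image_val_supp
    Kv.connected_induce_image_val_supp hdisj ?_ f hf (hnotS Ku) (hnotS Kv)
    (fun j => hsep.exists_adj_of_minimal hmin (hfS j) Ku hu)
    (fun j => hsep.symm.exists_adj_of_minimal (fun S' hS' h => hmin S' hS' h.symm) (hfS j) Kv hv)
  rintro a ha b ⟨b, hb, rfl⟩ hab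
  exact hdisj.notMem_of_mem_right ⟨b, hb, rfl⟩ (Ku.mem_image_val_supp_of_adj ha b.2 hab)

theorem HasInducedMinor.exists_isMinimalSeparator_le_indepNumOn [Finite V] {q : ℕ}
    (h : G.HasInducedMinor (K2q q)) : ∃ S, G.IsMinimalSeparator S ∧ q ≤ G.indepNumOn S := by
  obtain ⟨X, hconn, hdisj, hadj⟩ := h
  set A := X (.inl 0)
  set B := X (.inl 1)
  have hAB : Disjoint A B := hdisj (by simp)
  have hnadj : ∀ a ∈ A, ∀ b ∈ B, ¬ G.Adj a b := fun a ha b hb hab => by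
    simpa using (hadj (.inl 0) (.inl 1) (by simp)).2 ⟨a, ha, b, hb, hab⟩
  obtain ⟨⟨u, hu⟩⟩ := (hconn (.inl 0)).nonempty
  obtain ⟨⟨v, hv⟩⟩ := (hconn (.inl 1)).nonempty
  obtain ⟨T, hTAB, hT, hTmin⟩ :=
    exists_minimal_isSeparator_subset (isSeparator_compl_union hAB hnadj hu hv)
  -- every branch set `X (inr j)` links `A` to `B`, so it must meet the separator `T`
  have hmeet : ∀ j, ∃ x ∈ T, x ∈ X (.inr j) := by
    intro j
    obtain ⟨a, ha, y, hy, hay⟩ := (hadj (.inl 0) (.inr j) (by simp)).1 (by simp)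
    obtain ⟨y', hy', b, hb, hyb⟩ := (hadj (.inr j) (.inl 1) (by simp)).1 (by simp)
    have hAY := connected_induce_union (hconn _).preconnected (hconn _).preconnected ha hy hay
    have hC := connected_induce_union hAY.preconnected (hconn _).preconnected (Or.inr hy') hb hyb
    obtain ⟨x, hxC, hxT⟩ := hT.inter_nonempty_of_connected hC (Or.inl (Or.inl hu)) (Or.inr hv)
    have hxAB : x ∉ A ∪ B := hTAB hxT
    refine ⟨x, hxT, ?_⟩
    rcases hxC with (hxA | hxY) | hxB
    exacts [absurd (Or.inl hxA) hxAB, hxY, absurd (Or.inr hxB) hxAB]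
  choose f hfT hfX using hmeet
  have hf : Function.Injective f := fun i j hij => by
    by_contra hne
    exact Set.disjoint_left.1 (hdisj (by simpa using hne)) (hfX i) (hij ▸ hfX j)
  refine ⟨T, ⟨u, v, hAB.ne_of_mem hu hv, hnadj u hu v hv, hT, hTmin⟩,
    le_indepNumOn_iff.2 ⟨⟨f, hf⟩, hfT, fun i j hij hadj' => ?_⟩⟩
  simpa using (hadj (.inr i) (.inr j) (by simpa using hij)).2 ⟨f i, hfX i, f j, hfX j, hadj'⟩

end SimpleGraph

theorem k2q_inducedMinorFree_iff_minimalSeparator_indepNumOn_lt_general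
    {V : Type} [Fintype V] (q : ℕ) (G : SimpleGraph V) :
    ¬ G.HasInducedMinor (K2q q) ↔
      ∀ S : Set V, G.IsMinimalSeparator S → G.indepNumOn S < q := by
  refine ⟨fun h S hS => ?_, fun h hminor => ?_⟩
  · by_contra! hq
    exact h (hS.hasInducedMinor_K2q hq)
  · obtain ⟨S, hS, hq⟩ := hminor.exists_isMinimalSeparator_le_indepNumOn
    exact (h S hS).not_ge hq

/-- For every positive integer `q`, a graph `G` is
`K_{2,q}`-induced-minor-free iff every minimal separator of `G` induces a subgraph
with independence number strictly less than `q`. -/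
theorem k2q_inducedMinorFree_iff_minimalSeparator_indepNumOn_lt
    {V : Type} [Fintype V] (q : ℕ) (hq : 1 ≤ q) (G : SimpleGraph V) :
    ¬ G.HasInducedMinor (K2q q) ↔
      ∀ S : Set V, G.IsMinimalSeparator S → G.indepNumOn S < q :=
  k2q_inducedMinorFree_iff_minimalSeparator_indepNumOn_lt_general q G
end

section
/- Let G be a graph and let X be a potential maximal clique of G. Then either X is a clique in G, or there exist two minimal separators S and T of G such that X ⊆ S ∪ T. -/
open SimpleGraph

/-! ## Common definitions -/

variable {V : Type} {W : Type}

/-!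
Let `H` be a minimal triangulation of `G` in which `X` is a maximal clique. For a clique `Y` of
`H`, deleting the edges of `H` between different components of `G - Y` keeps `H` chordal, so by
minimality there are no such edges; for `Y = X \ {u, v}` this makes `X` cliquish: every non-edge
`uv` of `G` inside `X` lies in `N(C)` for some component `C` of `G - X`. As `H` is chordal and `X`
is a maximal clique, no `N(C)` is all of `X`, hence every `N(C)` is a minimal separator.

If `X` is not a clique of `G`, a search over non-edges yields a component `C` and a non-edge `uv`
such that every `x ∈ X \ N(C)` is joined to `u` avoiding `v` and to `v` avoiding `u`, by an edge or
through some `N(C')`. The minimal `u,v`-separator closest to `u` and to the components of `G - X`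
attached to `u` but not to `v` then contains `X \ N(C)`.
-/

namespace SimpleGraph

variable {V : Type} {G H : SimpleGraph V}

/-! ### Components of `G - Z` and their neighbourhoods -/

def ReachableOutside (G : SimpleGraph V) (Z : Set V) (a b : V) : Prop :=
  ∃ p : G.Walk a b, ∀ x ∈ p.support, x ∉ Z

/-- The component of `G - Z` containing `w`; empty if `w ∈ Z`. -/
def componentOutside (G : SimpleGraph V) (Z : Set V) (w : V) : Set V :=
  {z | G.ReachableOutside Z w z}

/-- The neighbourhood `N(M)` of `M`. -/
def boundary (G : SimpleGraph V) (M : Set V) : Set V :=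
  {y | y ∉ M ∧ ∃ a ∈ M, G.Adj a y}

namespace ReachableOutside

variable {Z : Set V} {a b c : V}

theorem refl (ha : a ∉ Z) : G.ReachableOutside Z a a :=
  ⟨.nil, by simpa using ha⟩

theorem symm (h : G.ReachableOutside Z a b) : G.ReachableOutside Z b a := by
  obtain ⟨p, hp⟩ := h
  exact ⟨p.reverse, by simpa using hp⟩

theorem trans (h : G.ReachableOutside Z a b) (h' : G.ReachableOutside Z b c) :
    G.ReachableOutside Z a c := by
  obtain ⟨p, hp⟩ := h
  obtain ⟨q, hq⟩ := h'
  refine ⟨p.append q, fun x hx => ?_⟩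
  rcases (Walk.mem_support_append_iff p q).mp hx with hx | hx
  exacts [hp x hx, hq x hx]

theorem left_notMem (h : G.ReachableOutside Z a b) : a ∉ Z := by
  obtain ⟨p, hp⟩ := h
  exact hp a p.start_mem_support

theorem right_notMem (h : G.ReachableOutside Z a b) : b ∉ Z :=
  h.symm.left_notMem

theorem of_adj (hab : G.Adj a b) (ha : a ∉ Z) (hb : b ∉ Z) : G.ReachableOutside Z a b :=
  ⟨hab.toWalk, by simp [ha, hb]⟩

theorem trans_adj (h : G.ReachableOutside Z a b) (hbc : G.Adj b c) (hc : c ∉ Z) :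
    G.ReachableOutside Z a c :=
  h.trans (of_adj hbc h.right_notMem hc)

theorem mono {Z' : Set V} (hZ : Z' ⊆ Z) (h : G.ReachableOutside Z a b) :
    G.ReachableOutside Z' a b := by
  obtain ⟨p, hp⟩ := h
  exact ⟨p, fun x hx hxZ => hp x hx (hZ hxZ)⟩

end ReachableOutside

section Components

variable {Z M : Set V} {w x y : V}

theorem mem_componentOutside_self (hw : w ∉ Z) : w ∈ G.componentOutside Z w :=
  ReachableOutside.refl hw

theorem notMem_of_mem_componentOutside (hx : x ∈ G.componentOutside Z w) : x ∉ Z :=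
  ReachableOutside.right_notMem hx

theorem disjoint_componentOutside : Disjoint (G.componentOutside Z w) Z :=
  Set.disjoint_left.mpr fun _ => notMem_of_mem_componentOutside

theorem componentOutside_eq_of_mem (hx : x ∈ G.componentOutside Z w) :
    G.componentOutside Z x = G.componentOutside Z w := by
  ext z
  exact ⟨(ReachableOutside.trans hx ·), (ReachableOutside.trans (ReachableOutside.symm hx) ·)⟩

theorem mem_componentOutside_of_adj (hx : x ∈ G.componentOutside Z w) (hxy : G.Adj x y)
    (hy : y ∉ Z) : y ∈ G.componentOutside Z w :=
  ReachableOutside.trans_adj hx hxy hy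

theorem boundary_componentOutside_subset : G.boundary (G.componentOutside Z w) ⊆ Z := by
  rintro y ⟨hy, x, hx, hxy⟩
  by_contra hyZ
  exact hy (mem_componentOutside_of_adj hx hxy hyZ)

theorem disjoint_boundary (M : Set V) : Disjoint M (G.boundary M) :=
  Set.disjoint_left.mpr fun _ hx hx' => hx'.1 hx

theorem Walk.support_subset_componentOutside {a b : V} (p : G.Walk a b)
    (hp : ∀ x ∈ p.support, x ∉ Z) (ha : a ∈ G.componentOutside Z w) :
    ∀ x ∈ p.support, x ∈ G.componentOutside Z w := by
  induction p with
  | nil => simpa using ha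
  | cons hadj p ih =>
    simp only [Walk.support_cons, List.mem_cons, forall_eq_or_imp] at hp ⊢
    exact ⟨ha, ih hp.2 (mem_componentOutside_of_adj ha hadj (hp.2 _ p.start_mem_support))⟩

theorem reachableOutside_of_mem_componentOutside (hx : x ∈ G.componentOutside Z w)
    (hy : y ∈ G.componentOutside Z w) (hM : Disjoint (G.componentOutside Z w) M) :
    G.ReachableOutside M x y := by
  obtain ⟨p, hp⟩ := ReachableOutside.trans (ReachableOutside.symm hx) hy
  exact ⟨p, fun z hz => hM.notMem_of_mem_left (Walk.support_subset_componentOutside p hp hx z hz)⟩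

theorem Walk.exists_mem_support_mem_boundary {a b : V} (p : G.Walk a b) (ha : a ∉ M)
    (hb : b ∈ M) : ∃ x ∈ p.support, x ∈ G.boundary M := by
  induction p with
  | nil => exact absurd hb ha
  | @cons u v _ hadj p ih =>
    by_cases hv : v ∈ M
    · exact ⟨u, p.support.mem_cons_self, ha, v, hv, hadj.symm⟩
    · obtain ⟨x, hx, hxM⟩ := ih hv hb
      exact ⟨x, List.mem_cons_of_mem _ hx, hxM⟩

end Components

theorem exists_walk_support_subset_of_connected_induce {s : Set V} (hs : (G.induce s).Connected)
    {a b : V} (ha : a ∈ s) (hb : b ∈ s) : ∃ p : G.Walk a b, ∀ x ∈ p.support, x ∈ s := by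
  obtain ⟨p⟩ := hs ⟨a, ha⟩ ⟨b, hb⟩
  refine ⟨p.map (Embedding.induce s).toHom, fun x hx => ?_⟩
  obtain ⟨y, -, rfl⟩ := List.mem_map.mp (Walk.support_map _ p ▸ hx)
  exact y.2

theorem connected_induce_componentOutside {Z : Set V} {w : V} (hw : w ∉ Z) :
    (G.induce (G.componentOutside Z w)).Connected := by
  rw [connected_iff_exists_forall_reachable]
  refine ⟨⟨w, mem_componentOutside_self hw⟩, fun ⟨x, hx⟩ => ?_⟩
  obtain ⟨p, hp⟩ := id hx
  exact ⟨p.induce _ (Walk.support_subset_componentOutside p hp (mem_componentOutside_self hw))⟩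

/-- `N(C)` for the component `C` of `G - Z` containing `w`. -/
abbrev componentBoundary (G : SimpleGraph V) (Z : Set V) (w : V) : Set V :=
  G.boundary (G.componentOutside Z w)

theorem notMem_of_mem_componentBoundary {Z : Set V} {w x : V}
    (hx : x ∈ G.componentBoundary Z w) : w ∉ Z := by
  obtain ⟨-, a, ha, -⟩ := hx
  exact ReachableOutside.left_notMem ha

/-! ### Minimal separators -/

theorem isSeparator_iff {S : Set V} {u v : V} :
    G.IsSeparator u v S ↔ u ∉ S ∧ v ∉ S ∧ ¬ G.ReachableOutside S u v := by
  simp [IsSeparator, ReachableOutside]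

theorem isMinimalSeparator_of_subset_boundary {T : Set V} {p q : V}
    (hsep : ¬ G.ReachableOutside T p q) (hp : T ⊆ G.componentBoundary T p)
    (hq : T ⊆ G.componentBoundary T q) : G.IsMinimalSeparator T := by
  have hpT : p ∉ T := fun h => notMem_of_mem_componentBoundary (hp h) h
  have hqT : q ∉ T := fun h => notMem_of_mem_componentBoundary (hq h) h
  refine ⟨p, q, fun h => hsep (h ▸ .refl hpT), fun h => hsep (.of_adj h hpT hqT),
    isSeparator_iff.mpr ⟨hpT, hqT, hsep⟩, fun T' hT' hsep' => ?_⟩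
  obtain ⟨t, htT, htT'⟩ := Set.exists_of_ssubset hT'
  obtain ⟨-, a, hpa, hat⟩ := hp htT
  obtain ⟨-, b, hqb, hbt⟩ := hq htT
  have hpa' := ReachableOutside.mono hT'.subset hpa
  have hbq' := ReachableOutside.mono hT'.subset (ReachableOutside.symm hqb)
  exact (isSeparator_iff.mp hsep').2.2 ((hpa'.trans_adj hat htT').trans_adj hbt.symm
    hbq'.left_notMem |>.trans hbq')

/-- The minimal `u,v`-separator closest to a set `A` that is connected around `u`. -/
theorem isMinimalSeparator_componentBoundary_boundary {A : Set V} {u v : V} (hu : u ∈ A)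
    (hA : ∀ a ∈ A, G.ReachableOutside Aᶜ u a) (hv : v ∉ A) (hvA : v ∉ G.boundary A) :
    G.IsMinimalSeparator (G.componentBoundary (G.boundary A) v) := by
  set W := G.componentOutside (G.boundary A) v
  have hWA : Disjoint W A := by
    refine Set.disjoint_right.mpr fun a ha haW => ?_
    obtain ⟨p, hp⟩ := haW
    obtain ⟨x, hx, hxA⟩ := p.exists_mem_support_mem_boundary hv ha
    exact hp x hx hxA
  have hTA : Disjoint (G.boundary W) A :=
    (disjoint_boundary A).symm.mono_left boundary_componentOutside_subset
  refine isMinimalSeparator_of_subset_boundary (p := u) (q := v) ?_ ?_ ?_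
  · rintro ⟨p, hp⟩
    obtain ⟨x, hx, hxT⟩ :=
      p.exists_mem_support_mem_boundary (hWA.notMem_of_mem_right hu) (mem_componentOutside_self hvA)
    exact hp x hx hxT
  · intro t ht
    obtain ⟨-, a, ha, hat⟩ := boundary_componentOutside_subset ht
    exact ⟨(notMem_of_mem_componentOutside · ht), a,
      (hA a ha).mono fun x hx hxA => hTA.notMem_of_mem_left hx hxA, hat⟩
  · intro t ht
    obtain ⟨-, b, hb, hbt⟩ := id ht
    exact ⟨(notMem_of_mem_componentOutside · ht), b, reachableOutside_of_mem_componentOutside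
      (mem_componentOutside_self hvA) hb (disjoint_boundary W), hbt⟩

/-! ### Chordal graphs -/

theorem cycleGraph_adj_iff_val {n : ℕ} (hn : 2 ≤ n) {i j : Fin n} :
    (cycleGraph n).Adj i j ↔ i.val + 1 = j.val ∨ j.val + 1 = i.val ∨
      (i.val = 0 ∧ j.val + 1 = n) ∨ (j.val = 0 ∧ i.val + 1 = n) := by
  have hi := i.isLt
  have hj := j.isLt
  rw [cycleGraph_adj']
  rcases lt_trichotomy i j with hij | rfl | hij
  · rw [Fin.coe_sub_iff_lt.mpr hij, Fin.coe_sub_iff_le.mpr hij.le]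
    rw [Fin.lt_def] at hij
    omega
  · rw [Fin.coe_sub_iff_le.mpr le_rfl]
    omega
  · rw [Fin.coe_sub_iff_lt.mpr hij, Fin.coe_sub_iff_le.mpr hij.le]
    rw [Fin.lt_def] at hij
    omega

theorem not_isChordal_of_cycle {n : ℕ} (hn : 4 ≤ n) (φ : ℕ → V)
    (hφ : ∀ a b, a < b → b < n →
      φ a ≠ φ b ∧ (H.Adj (φ a) (φ b) ↔ b = a + 1 ∨ (a = 0 ∧ b + 1 = n))) :
    ¬ H.IsChordal := by
  have hadj : ∀ i j : Fin n, i.val < j.val →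
      (H.Adj (φ i) (φ j) ↔ (cycleGraph n).Adj i j) := fun i j hij => by
    rw [cycleGraph_adj_iff_val (by omega), (hφ _ _ hij j.isLt).2]
    omega
  have hinj : Function.Injective fun i : Fin n => φ i := fun i j hij => by
    rcases lt_trichotomy i.val j.val with h | h | h
    exacts [absurd hij (hφ _ _ h j.isLt).1, Fin.ext h, absurd hij.symm (hφ _ _ h i.isLt).1]
  refine fun hH => hH n hn _ ⟨⟨Equiv.ofInjective _ hinj, fun {i j} => ?_⟩⟩
  change H.Adj (φ i) (φ j) ↔ _
  rcases lt_trichotomy i.val j.val with h | h | h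
  · exact hadj i j h
  · simp [Fin.ext h]
  · rw [H.adj_comm, (cycleGraph n).adj_comm]
    exact hadj j i h

def Walk.IsInducedPath {u v : V} (p : G.Walk u v) : Prop :=
  ∀ i j, i < j → j ≤ p.length →
    p.getVert i ≠ p.getVert j ∧ (G.Adj (p.getVert i) (p.getVert j) → j = i + 1)

theorem Walk.exists_shorter_of_not_isInducedPath {u v : V} (p : G.Walk u v)
    (hp : ¬ p.IsInducedPath) : ∃ q : G.Walk u v, q.length < p.length ∧ q.support ⊆ p.support := by
  simp only [IsInducedPath, not_forall, not_and_or, not_not] at hp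
  obtain ⟨i, j, hij, hj, h⟩ := hp
  have htake : (p.take i).support ⊆ p.support := by
    rw [support_take]; exact List.take_subset _ _
  have hdrop : (p.drop j).support ⊆ p.support := by
    rw [drop_support_eq_support_drop_min]; exact List.drop_subset _ _
  rcases h with heq | ⟨hadj, hne⟩
  · refine ⟨(p.take i).append ((p.drop j).copy heq.symm rfl), ?_, ?_⟩
    · simp only [length_append, length_copy, take_length, drop_length]; omega
    · rw [support_append, support_copy]
      exact List.append_subset.mpr ⟨htake, fun x hx => hdrop (List.tail_subset _ hx)⟩
  · refine ⟨(p.take i).append (.cons hadj (p.drop j)), ?_, ?_⟩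
    · simp only [length_append, length_cons, take_length, drop_length]; omega
    · rw [support_append, support_cons, List.tail_cons]
      exact List.append_subset.mpr ⟨htake, hdrop⟩

theorem Walk.exists_isInducedPath {u v : V} (p : G.Walk u v) :
    ∃ q : G.Walk u v, q.IsInducedPath ∧ q.support ⊆ p.support := by
  induction hn : p.length using Nat.strong_induction_on generalizing p with
  | _ n ih =>
  by_cases hp : p.IsInducedPath
  · exact ⟨p, hp, List.Subset.refl _⟩
  obtain ⟨q, hq, hqp⟩ := p.exists_shorter_of_not_isInducedPath hp
  obtain ⟨r, hr, hrq⟩ := ih _ (hn ▸ hq) q rfl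
  exact ⟨r, hr, fun x hx => hqp (hrq hx)⟩

/-- `k₁ - p - k₂ - k₁` would be an induced cycle of length at least `4`. -/
theorem IsChordal.not_adj_of_isInducedPath (hH : H.IsChordal) {C : Set V} {c₁ c₂ k₁ k₂ : V}
    {p : H.Walk c₁ c₂} (hp : p.IsInducedPath) (hpC : ∀ x ∈ p.support, x ∈ C) (hlen : 0 < p.length)
    (hk₁ : k₁ ∉ C) (hk₂ : k₂ ∉ C) (h₁ : ∀ c ∈ C, H.Adj k₁ c ↔ c = c₁)
    (h₂ : ∀ c ∈ C, H.Adj k₂ c ↔ c = c₂) : ¬ H.Adj k₁ k₂ := by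
  intro hk
  set L := p.length
  have hC : ∀ a, p.getVert a ∈ C := fun a => hpC _ (p.getVert_mem_support a)
  have hne : ∀ a b, a < b → b ≤ L → p.getVert a ≠ p.getVert b := fun a b hab hb => (hp a b hab hb).1
  have hk₁' : ∀ a ≤ L, H.Adj (p.getVert a) k₁ ↔ a = 0 := fun a ha => by
    rw [H.adj_comm, h₁ _ (hC a)]
    refine ⟨fun h => by_contra fun h0 => hne 0 a (by omega) ha (p.getVert_zero.trans h.symm), ?_⟩
    rintro rfl
    exact p.getVert_zero
  have hk₂' : ∀ a ≤ L, H.Adj (p.getVert a) k₂ ↔ a = L := fun a ha => by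
    rw [H.adj_comm, h₂ _ (hC a)]
    refine ⟨fun h => by_contra fun hL => hne a L (by omega) le_rfl (h.trans p.getVert_length.symm),
      ?_⟩
    rintro rfl
    exact p.getVert_length
  set φ : ℕ → V := fun m => if m ≤ L then p.getVert m else if m = L + 1 then k₂ else k₁
  have hφ : ∀ m ≤ L, φ m = p.getVert m := fun m hm => if_pos hm
  have hφ₂ : φ (L + 1) = k₂ := by simp [φ]
  have hφ₁ : φ (L + 2) = k₁ := by simp [φ]
  refine not_isChordal_of_cycle (n := L + 3) (by omega) φ (fun a b hab hb => ?_) hH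
  rcases (show b ≤ L ∨ b = L + 1 ∨ b = L + 2 by omega) with hbL | rfl | rfl
  · rw [hφ a (by omega), hφ b hbL]
    refine ⟨hne a b hab hbL, fun h => Or.inl ((hp a b hab hbL).2 h), ?_⟩
    rintro (rfl | h)
    exacts [p.adj_getVert_succ (by omega), absurd h (by omega)]
  · rw [hφ a (by omega), hφ₂]
    exact ⟨fun h => hk₂ (h ▸ hC a), (hk₂' a (by omega)).trans (by omega)⟩
  · rw [hφ₁]
    by_cases ha : a ≤ L
    · rw [hφ a ha]
      exact ⟨fun h => hk₁ (h ▸ hC a), (hk₁' a ha).trans (by omega)⟩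
    · rw [show a = L + 1 by omega, hφ₂]
      exact ⟨hk.ne.symm, iff_of_true hk.symm (by omega)⟩

theorem exists_ne_connected_induce_sdiff_singleton [Finite V] {s : Set V}
    (hs : (G.induce s).Connected) (hnt : s.Nontrivial) : ∃ a ∈ s, ∃ b ∈ s, a ≠ b ∧
      (G.induce (s \ {a})).Connected ∧ (G.induce (s \ {b})).Connected := by
  classical
  have : Nontrivial s := hnt.coe_sort
  have : Fintype s := Fintype.ofFinite s
  obtain ⟨T, hTle, hT⟩ := hs.exists_isTree_le
  obtain ⟨a, b, hab, ha, hb⟩ := hT.exists_ne_and_degree_eq_one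
  have hleaf : ∀ x : s, T.degree x = 1 → (G.induce (s \ {x.1})).Connected := fun x hx => by
    have h : ((G.induce s).induce {x}ᶜ).Connected :=
      (hT.connected.induce_compl_singleton_of_degree_eq_one hx).mono fun _ _ h => hTle h
    refine h.map ⟨fun y => ⟨y.1, y.1.2, fun h => y.2 (Subtype.ext h)⟩, fun h => h⟩ ?_
    exact fun z => ⟨⟨⟨z, z.2.1⟩, fun h => z.2.2 (congrArg Subtype.val h)⟩, rfl⟩
  exact ⟨a, a.2, b, b.2, fun h => hab (Subtype.ext h), hleaf a ha, hleaf b hb⟩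

/-- Minimal counterexample: removing either of two non-cut vertices `c₁, c₂` of `C` loses some
`kᵢ ∈ K` whose only neighbour in `C` is `cᵢ`; then `k₁ - c₁ ⋯ c₂ - k₂ - k₁` is an
induced cycle of length at least `4`. -/
theorem IsChordal.exists_forall_adj_of_dominating [Finite V] (hH : H.IsChordal) {K : Set V}
    (hK : H.IsClique K) {C : Set V} (hC : (H.induce C).Connected) (hCK : Disjoint C K)
    (hdom : ∀ k ∈ K, ∃ c ∈ C, H.Adj k c) : ∃ c ∈ C, ∀ k ∈ K, H.Adj c k := by
  induction hn : C.ncard using Nat.strong_induction_on generalizing C with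
  | _ n ih =>
  by_contra! hbad
  have hnt : C.Nontrivial := by
    obtain ⟨c, hc⟩ := hC.nonempty
    refine Set.not_subsingleton_iff.mp fun hsub => ?_
    obtain ⟨k, hk, hck⟩ := hbad c hc
    obtain ⟨c', hc', hkc'⟩ := hdom k hk
    exact hck (hsub hc hc' ▸ hkc'.symm)
  have hprivate : ∀ c ∈ C, (H.induce (C \ {c})).Connected →
      ∃ k ∈ K, ∀ c' ∈ C, H.Adj k c' ↔ c' = c := by
    intro c hc hCc
    have hsmaller : ¬ ∀ k ∈ K, ∃ c' ∈ C \ {c}, H.Adj k c' := fun hdom' => by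
      obtain ⟨c', hc', hall⟩ := ih _ (hn ▸ Set.ncard_sdiff_singleton_lt_of_mem hc) hCc
        (hCK.mono_left Set.sdiff_subset) hdom' rfl
      obtain ⟨k, hk, hk'⟩ := hbad c' hc'.1
      exact hk' (hall k hk)
    push Not at hsmaller
    obtain ⟨k, hk, hk'⟩ := hsmaller
    refine ⟨k, hk, fun c' hc' => ⟨fun h => by_contra fun hne => hk' c' ⟨hc', hne⟩ h, ?_⟩⟩
    rintro rfl
    obtain ⟨c'', hc'', hkc''⟩ := hdom k hk
    by_contra h
    exact hk' c'' ⟨hc'', fun e => h (e ▸ hkc'')⟩ hkc''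
  obtain ⟨c₁, hc₁, c₂, hc₂, hne, hC₁, hC₂⟩ := exists_ne_connected_induce_sdiff_singleton hC hnt
  obtain ⟨k₁, hk₁, h₁⟩ := hprivate c₁ hc₁ hC₁
  obtain ⟨k₂, hk₂, h₂⟩ := hprivate c₂ hc₂ hC₂
  have hk : k₁ ≠ k₂ := fun h => hne ((h₁ c₂ hc₂).mp (h ▸ (h₂ c₂ hc₂).mpr rfl)).symm
  obtain ⟨p, hpC⟩ := exists_walk_support_subset_of_connected_induce hC hc₁ hc₂
  obtain ⟨q, hq, hqp⟩ := p.exists_isInducedPath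
  have hlen : 0 < q.length := Nat.pos_of_ne_zero fun h => hne (q.eq_of_length_eq_zero h)
  exact hH.not_adj_of_isInducedPath hq (fun x hx => hpC x (hqp hx)) hlen
    (hCK.notMem_of_mem_right hk₁) (hCK.notMem_of_mem_right hk₂) h₁ h₂ (hK hk₁ hk₂ hk)

/-! ### Minimal triangulations -/

theorem ReachableOutside.of_chain {Z : Set V} {f : ℕ → V} {a b : ℕ} (hab : a ≤ b)
    (hf : ∀ k, a ≤ k → k < b → G.ReachableOutside Z (f k) (f (k + 1))) (ha : f a ∉ Z) :
    G.ReachableOutside Z (f a) (f b) := by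
  induction b, hab using Nat.le_induction with
  | base => exact .refl ha
  | succ b hab ih =>
    exact (ih fun k hk hkb => hf k hk (by omega)).trans (hf b hab (by omega))

/-- Deleting pairwise cyclically consecutive positions from a cycle leaves a path. -/
theorem ReachableOutside.of_cycle {Z : Set V} {n : ℕ} {f : ℕ → V}
    (hstep : ∀ a b, a < n → b < n → (a + 1 = b ∨ (b = 0 ∧ a + 1 = n)) → f a ∉ Z → f b ∉ Z →
      G.ReachableOutside Z (f a) (f b))
    (hZ : ∀ a b, a < b → b < n → f a ∈ Z → f b ∈ Z → b = a + 1 ∨ (a = 0 ∧ b + 1 = n))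
    {a b : ℕ} (hab : a < b) (hb : b < n) (ha' : f a ∉ Z) (hb' : f b ∉ Z) :
    G.ReachableOutside Z (f a) (f b) := by
  by_contra hnot
  obtain ⟨c, hac, hcb, hc⟩ : ∃ c, a < c ∧ c < b ∧ f c ∈ Z := by
    by_contra! h
    have hout : ∀ k, a ≤ k → k ≤ b → f k ∉ Z := fun k h₁ h₂ => by
      rcases (show k = a ∨ k = b ∨ (a < k ∧ k < b) by omega) with rfl | rfl | ⟨h₁, h₂⟩
      exacts [ha', hb', h k h₁ h₂]
    exact hnot (.of_chain hab.le (fun k h₁ h₂ => hstep k (k + 1) (by omega) (by omega)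
      (by omega) (hout k h₁ h₂.le) (hout (k + 1) (by omega) h₂)) ha')
  obtain ⟨d, hd, hdn, hdY⟩ : ∃ d, (d < a ∨ b < d) ∧ d < n ∧ f d ∈ Z := by
    by_contra! h
    have hout : ∀ k, (k ≤ a ∨ b ≤ k) → k < n → f k ∉ Z := fun k h₁ h₂ => by
      rcases (show k = a ∨ k = b ∨ (k < a ∨ b < k) by omega) with rfl | rfl | h₁
      exacts [ha', hb', h k h₁ h₂]
    have hba : G.ReachableOutside Z (f b) (f (n - 1)) :=
      .of_chain (by omega) (fun k h₁ h₂ => hstep k (k + 1) (by omega) (by omega) (by omega)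
        (hout k (by omega) (by omega)) (hout (k + 1) (by omega) (by omega))) hb'
    have h0a : G.ReachableOutside Z (f 0) (f a) :=
      .of_chain (by omega) (fun k h₁ h₂ => hstep k (k + 1) (by omega) (by omega) (by omega)
        (hout k (by omega) (by omega)) (hout (k + 1) (by omega) (by omega)))
        (hout 0 (by omega) (by omega))
    exact hnot ((hba.trans ((hstep (n - 1) 0 (by omega) (by omega) (by omega)
      (hout _ (by omega) (by omega)) (hout 0 (by omega) (by omega))).trans h0a)).symm)
  rcases hd with hd | hd
  · have := hZ d c (by omega) (by omega) hdY hc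
    omega
  · have := hZ c d (by omega) hdn hc hdY
    omega

def deleteCrossEdges (H G : SimpleGraph V) (Y : Set V) : SimpleGraph V where
  Adj a b := H.Adj a b ∧ (a ∈ Y ∨ b ∈ Y ∨ G.ReachableOutside Y a b)
  symm := ⟨fun _ _ ⟨h, h'⟩ => ⟨h.symm, by
    rcases h' with h' | h' | h'
    exacts [Or.inr (Or.inl h'), Or.inl h', Or.inr (Or.inr h'.symm)]⟩⟩
  loopless := ⟨fun a h => H.loopless.irrefl a h.1⟩

theorem deleteCrossEdges_le (Y : Set V) : H.deleteCrossEdges G Y ≤ H := fun _ _ h => h.1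

theorem le_deleteCrossEdges (hGH : G ≤ H) (Y : Set V) : G ≤ H.deleteCrossEdges G Y := by
  intro a b hab
  refine ⟨hGH hab, ?_⟩
  by_cases ha : a ∈ Y
  · exact Or.inl ha
  by_cases hb : b ∈ Y
  · exact Or.inr (Or.inl hb)
  · exact Or.inr (Or.inr (.of_adj hab ha hb))

/-- On an induced cycle of `H.deleteCrossEdges G Y`, the vertices of the clique `Y` are
consecutive, so the other vertices form an arc whose consecutive vertices are joined outside `Y`. -/
theorem IsChordal.deleteCrossEdges (hH : H.IsChordal) {Y : Set V} (hY : H.IsClique Y) :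
    (H.deleteCrossEdges G Y).IsChordal := by
  intro n hn A ⟨e⟩
  have : NeZero n := ⟨by omega⟩
  set f : ℕ → V := fun k => e (Fin.ofNat n k)
  have hfe : ∀ i : Fin n, f i.val = e i := fun i => by simp [f]
  have hadj : ∀ a b, a < n → b < n → ((H.deleteCrossEdges G Y).Adj (f a) (f b) ↔
      a + 1 = b ∨ b + 1 = a ∨ (a = 0 ∧ b + 1 = n) ∨ (b = 0 ∧ a + 1 = n)) := fun a b ha hb => by
    have := (cycleGraph_adj_iff_val (by omega) (i := Fin.ofNat n a) (j := Fin.ofNat n b))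
    simp only [Fin.val_ofNat, Nat.mod_eq_of_lt ha, Nat.mod_eq_of_lt hb] at this
    rw [← this, ← e.map_rel_iff]
    rfl
  have hstep : ∀ a b, a < n → b < n → (a + 1 = b ∨ (b = 0 ∧ a + 1 = n)) → f a ∉ Y → f b ∉ Y →
      G.ReachableOutside Y (f a) (f b) := fun a b ha hb hab ha' hb' => by
    rcases ((hadj a b ha hb).mpr (by omega)).2 with h | h | h
    exacts [absurd h ha', absurd h hb', h]
  have hQ : ∀ a b, a < b → b < n → f a ∈ Y → f b ∈ Y → b = a + 1 ∨ (a = 0 ∧ b + 1 = n) := by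
    intro a b hab hb ha' hb'
    have hne : f a ≠ f b := fun h => by
      have := congrArg Fin.val (e.injective (Subtype.val_injective h))
      simp only [Fin.val_ofNat, Nat.mod_eq_of_lt hb, Nat.mod_eq_of_lt (hab.trans hb)] at this
      omega
    have := (hadj a b (by omega) hb).mp ⟨hY ha' hb' hne, Or.inl ha'⟩
    omega
  refine hH n hn A ⟨⟨e.toEquiv, fun {i j} => ?_⟩⟩
  rw [← e.map_rel_iff]
  change H.Adj (e i) (e j) ↔ (H.deleteCrossEdges G Y).Adj (e i) (e j)
  refine ⟨fun h => ⟨h, ?_⟩, fun h => h.1⟩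
  rw [← hfe i, ← hfe j] at h ⊢
  by_cases hi : f i ∈ Y
  · exact Or.inl hi
  by_cases hj : f j ∈ Y
  · exact Or.inr (Or.inl hj)
  refine Or.inr (Or.inr ?_)
  rcases lt_trichotomy i.val j.val with hij | hij | hij
  · exact .of_cycle hstep hQ hij j.isLt hi hj
  · rw [hij] at h
    exact absurd h (H.loopless.irrefl _)
  · exact (ReachableOutside.of_cycle hstep hQ hij i.isLt hj hi).symm

/-- The cliquishness condition of Bouchitté and Todinca. -/
def IsCliquish (G : SimpleGraph V) (Ω : Set V) : Prop :=
  ∀ ⦃u⦄, u ∈ Ω → ∀ ⦃v⦄, v ∈ Ω → u ≠ v → ¬ G.Adj u v →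
    ∃ w, u ∈ G.componentBoundary Ω w ∧ v ∈ G.componentBoundary Ω w

namespace IsMinimalTriangulation

theorem reachableOutside_of_adj (hmin : G.IsMinimalTriangulation H) {Y : Set V}
    (hY : H.IsClique Y) {p q : V} (hpq : H.Adj p q) (hp : p ∉ Y) (hq : q ∉ Y) :
    G.ReachableOutside Y p q := by
  obtain ⟨hGH, hH, hminimal⟩ := hmin
  have heq : H.deleteCrossEdges G Y = H := (deleteCrossEdges_le Y).eq_of_not_lt
    (hminimal _ (le_deleteCrossEdges hGH Y) (hH.deleteCrossEdges hY))
  have hpq' : (H.deleteCrossEdges G Y).Adj p q := by rwa [heq]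
  rcases hpq'.2 with h | h | h
  exacts [absurd h hp, absurd h hq, h]

theorem isCliquish (hmin : G.IsMinimalTriangulation H) {Ω : Set V} (hΩ : H.IsClique Ω) :
    G.IsCliquish Ω := by
  classical
  intro u hu v hv huv hadj
  obtain ⟨p, hp⟩ := hmin.reachableOutside_of_adj (hΩ.subset Set.sdiff_subset)
    (hΩ hu hv huv) (by simp : u ∉ Ω \ {u, v}) (by simp : v ∉ Ω \ {u, v})
  have hpath := p.bypass_isPath
  have hsupp : ∀ x ∈ p.bypass.support, x ∉ Ω \ {u, v} :=
    fun x hx => hp x (p.support_bypass_subset_support hx)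
  generalize p.bypass = q at hpath hsupp
  cases q with
  | nil => exact absurd rfl huv
  | @cons _ b _ hub q =>
    have huq : u ∉ q.support := ((Walk.cons_isPath_iff _ _).mp hpath).2
    have hqΩ : ∀ x ∈ q.support, x ∈ Ω → x = v := fun x hx hxΩ => by
      have := hsupp x (List.mem_cons_of_mem _ hx)
      simp only [Set.mem_sdiff, Set.mem_insert_iff, Set.mem_singleton_iff, not_and, not_or,
        not_not] at this
      exact this hxΩ fun hxu => huq (hxu ▸ hx)
    have hb : b ∉ Ω := fun hbΩ => hadj (hqΩ b q.start_mem_support hbΩ ▸ hub)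
    refine ⟨b, ⟨(notMem_of_mem_componentOutside · hu), b, mem_componentOutside_self hb,
      hub.symm⟩, ?_⟩
    obtain ⟨x, hx, hxN⟩ := q.reverse.exists_mem_support_mem_boundary
      (disjoint_componentOutside.notMem_of_mem_right hv) (mem_componentOutside_self hb)
    rw [Walk.support_reverse, List.mem_reverse] at hx
    rwa [← hqΩ x hx (boundary_componentOutside_subset hxN)]

end IsMinimalTriangulation

theorem IsChordal.exists_notMem_componentBoundary [Finite V] (hGH : G ≤ H) (hH : H.IsChordal)
    {Ω : Set V} (hΩ : H.IsClique Ω) (hmax : ∀ Y, H.IsClique Y → Ω ⊆ Y → Y = Ω) {w : V}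
    (hw : w ∉ Ω) : ∃ z ∈ Ω, z ∉ G.componentBoundary Ω w := by
  by_contra! hfull
  have hC : (H.induce (G.componentOutside Ω w)).Connected :=
    (connected_induce_componentOutside hw).mono fun _ _ h => hGH h
  obtain ⟨c, hc, hcΩ⟩ := hH.exists_forall_adj_of_dominating hΩ hC disjoint_componentOutside
    fun k hk => by
      obtain ⟨-, c, hc, hck⟩ := hfull k hk
      exact ⟨c, hc, (hGH hck).symm⟩
  have hins := hmax _ (hΩ.insert fun k hk _ => hcΩ k hk) (Set.subset_insert c Ω)
  exact notMem_of_mem_componentOutside hc (hins ▸ Set.mem_insert c Ω)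

/-! ### Two minimal separators covering a cliquish set -/

def LinkedAvoiding (G : SimpleGraph V) (Ω : Set V) (z x y : V) : Prop :=
  G.Adj x y ∨ ∃ w, x ∈ G.componentBoundary Ω w ∧ y ∈ G.componentBoundary Ω w ∧
    z ∉ G.componentBoundary Ω w

def side (G : SimpleGraph V) (Ω : Set V) (u v : V) : Set V :=
  {a | a = u ∨ (u ∈ G.componentBoundary Ω a ∧ v ∉ G.componentBoundary Ω a)}

section Side

variable {Ω : Set V} {u v w : V}

theorem componentOutside_subset_side (hu : u ∈ G.componentBoundary Ω w)
    (hv : v ∉ G.componentBoundary Ω w) : G.componentOutside Ω w ⊆ G.side Ω u v := by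
  intro c hc
  rw [side, Set.mem_ofPred_eq, componentBoundary, componentOutside_eq_of_mem hc]
  exact Or.inr ⟨hu, hv⟩

theorem reachableOutside_compl_side {a : V} (ha : a ∈ G.side Ω u v) :
    G.ReachableOutside (G.side Ω u v)ᶜ u a := by
  have hu_side : u ∈ G.side Ω u v := Or.inl rfl
  rcases ha with rfl | ⟨hu, hv⟩
  · exact .refl (· hu_side)
  have hsub := componentOutside_subset_side hu hv
  have ha : a ∈ G.componentOutside Ω a :=
    mem_componentOutside_self (notMem_of_mem_componentBoundary hu)
  obtain ⟨-, c, hc, hcu⟩ := hu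
  exact (ReachableOutside.of_adj hcu.symm (not_not_intro hu_side) (not_not_intro (hsub hc))).trans
    (reachableOutside_of_mem_componentOutside hc ha (Set.disjoint_compl_right_iff_subset.mpr hsub))

theorem notMem_side (hv : v ∈ Ω) (huv : u ≠ v) : v ∉ G.side Ω u v := by
  rintro (h | ⟨hu, -⟩)
  · exact huv h.symm
  · exact notMem_of_mem_componentBoundary hu hv

theorem notMem_boundary_side (hv : v ∈ Ω) (hadj : ¬ G.Adj u v) :
    v ∉ G.boundary (G.side Ω u v) := by
  rintro ⟨-, a, (rfl | ⟨hu, hva⟩), hav⟩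
  · exact hadj hav
  · have ha : a ∈ G.componentOutside Ω a :=
      mem_componentOutside_self (notMem_of_mem_componentBoundary hu)
    exact hva ⟨fun h => notMem_of_mem_componentOutside h hv, a, ha, hav⟩

theorem disjoint_componentOutside_boundary_side (hu : u ∈ Ω)
    (hw : u ∉ G.componentBoundary Ω w) :
    Disjoint (G.componentOutside Ω w) (G.boundary (G.side Ω u v)) := by
  refine Set.disjoint_left.mpr fun y hy ⟨_, a, ha, hay⟩ => ?_
  rcases ha with rfl | ⟨hua, -⟩
  · exact hw ⟨fun h => notMem_of_mem_componentOutside h hu, y, hy, hay.symm⟩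
  · have haw : a ∈ G.componentOutside Ω w :=
      mem_componentOutside_of_adj hy hay.symm (notMem_of_mem_componentBoundary hua)
    rw [componentBoundary, componentOutside_eq_of_mem haw] at hua
    exact hw hua

theorem exists_isMinimalSeparator_forall_linkedAvoiding (hu : u ∈ Ω) (hv : v ∈ Ω) (huv : u ≠ v)
    (hadj : ¬ G.Adj u v) : ∃ T, G.IsMinimalSeparator T ∧
      ∀ x ∈ Ω, G.LinkedAvoiding Ω v x u → G.LinkedAvoiding Ω u x v → x ∈ T := by
  set A := G.side Ω u v
  set W := G.componentOutside (G.boundary A) v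
  have hvW : v ∈ W := mem_componentOutside_self (notMem_boundary_side hv hadj)
  refine ⟨G.boundary W, isMinimalSeparator_componentBoundary_boundary (Or.inl rfl)
    (fun _ => reachableOutside_compl_side) (notMem_side hv huv) (notMem_boundary_side hv hadj),
    fun x hx hxu hxv => ?_⟩
  have hxA : x ∈ G.boundary A := by
    have hxA : x ∉ A := by
      rintro (rfl | ⟨hx', -⟩)
      · rcases hxv with h | ⟨w, hxw, -, hxw'⟩
        exacts [hadj h, hxw' hxw]
      · exact notMem_of_mem_componentBoundary hx' hx
    rcases hxu with h | ⟨w, hxw, huw, hvw⟩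
    · exact ⟨hxA, u, Or.inl rfl, h.symm⟩
    · obtain ⟨-, c, hc, hcx⟩ := hxw
      exact ⟨hxA, c, componentOutside_subset_side huw hvw hc, hcx⟩
  obtain ⟨b, hb, hbx⟩ : ∃ b ∈ W, G.Adj b x := by
    rcases hxv with h | ⟨w, hxw, hvw, huw⟩
    · exact ⟨v, hvW, h.symm⟩
    · have hdisj := disjoint_componentOutside_boundary_side (v := v) hu huw
      obtain ⟨-, c, hc, hcv⟩ := hvw
      obtain ⟨-, c', hc', hc'x⟩ := hxw
      have hcW : c ∈ W := mem_componentOutside_of_adj hvW hcv.symm (hdisj.notMem_of_mem_left hc)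
      exact ⟨c', ReachableOutside.trans hcW
        (reachableOutside_of_mem_componentOutside hc hc' hdisj), hc'x⟩
  exact ⟨(notMem_of_mem_componentOutside · hxA), b, hb, hbx⟩

end Side

def LinkedVia (G : SimpleGraph V) (Ω W : Set V) (x y : V) : Prop :=
  G.Adj x y ∨ ∃ w ∈ W, x ∈ G.componentBoundary Ω w ∧ y ∈ G.componentBoundary Ω w

namespace IsCliquish

variable {Ω : Set V} {w z : V}

theorem isMinimalSeparator_componentBoundary (hΩ : G.IsCliquish Ω) (hw : w ∉ Ω) (hz : z ∈ Ω)
    (hzw : z ∉ G.componentBoundary Ω w) : G.IsMinimalSeparator (G.componentBoundary Ω w) := by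
  set S := G.componentBoundary Ω w
  have hdisj : ∀ w', Disjoint (G.componentOutside Ω w') S := fun w' =>
    disjoint_componentOutside.mono_right boundary_componentOutside_subset
  refine isMinimalSeparator_of_subset_boundary (p := w) (q := z) ?_ ?_ ?_
  · rintro h
    obtain ⟨p, hp⟩ := ReachableOutside.symm h
    obtain ⟨x, hx, hxS⟩ := p.exists_mem_support_mem_boundary
      (disjoint_componentOutside.notMem_of_mem_right hz) (mem_componentOutside_self hw)
    exact hp x hx hxS
  · intro t ht
    obtain ⟨-, a, ha, hat⟩ := id ht
    exact ⟨(notMem_of_mem_componentOutside · ht), a, reachableOutside_of_mem_componentOutside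
      (mem_componentOutside_self hw) ha (hdisj w), hat⟩
  · intro t ht
    refine ⟨(notMem_of_mem_componentOutside · ht), ?_⟩
    by_cases htz : G.Adj t z
    · exact ⟨z, mem_componentOutside_self hzw, htz.symm⟩
    obtain ⟨w', ⟨-, c, hc, hct⟩, ⟨-, c', hc', hc'z⟩⟩ :=
      hΩ (boundary_componentOutside_subset ht) hz (fun h => hzw (h ▸ ht)) htz
    exact ⟨c, (ReachableOutside.of_adj hc'z.symm hzw ((hdisj w').notMem_of_mem_left hc')).trans
      (reachableOutside_of_mem_componentOutside hc' hc (hdisj w')), hct⟩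

end IsCliquish

namespace LinkedVia

variable {Ω W : Set V} {x y z : V}

theorem symm (h : G.LinkedVia Ω W x y) : G.LinkedVia Ω W y x := by
  rcases h with h | ⟨w, hw, hx, hy⟩
  exacts [Or.inl h.symm, Or.inr ⟨w, hw, hy, hx⟩]

theorem linkedAvoiding (h : G.LinkedVia Ω W x y) (hyz : ¬ G.LinkedVia Ω W y z) :
    G.LinkedAvoiding Ω z x y := by
  rcases h with h | ⟨w, hw, hx, hy⟩
  exacts [Or.inl h, Or.inr ⟨w, hx, hy, fun hz => hyz (Or.inr ⟨w, hw, hy, hz⟩)⟩]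

end LinkedVia

theorem not_linkedVia_insert {Ω W : Set V} {x y w : V} (h : ¬ G.LinkedVia Ω W x y)
    (hx : x ∉ G.componentBoundary Ω w) : ¬ G.LinkedVia Ω (insert w W) x y := by
  rintro (hxy | ⟨w', rfl | hw', hx', hy'⟩)
  exacts [h (Or.inl hxy), hx hx', h (Or.inr ⟨w', hw', hx', hy'⟩)]

namespace IsCliquish

variable {Ω : Set V}

/-- If some `x ∉ N(C_w)` is not linked to `u` (or `v`), restart from the pair `x, u` (or `x, v`)
with `w` added to `W`; since `w ∉ W`, this terminates. -/
theorem exists_unlinked_forall_linkedVia [Finite V] (hΩ : G.IsCliquish Ω) (W : Set V) {u v : V}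
    (hu : u ∈ Ω) (hv : v ∈ Ω) (huv : u ≠ v) (hlink : ¬ G.LinkedVia Ω W u v) :
    ∃ W' u' v' w, u' ∈ Ω ∧ v' ∈ Ω ∧ u' ≠ v' ∧ ¬ G.LinkedVia Ω W' u' v' ∧ w ∉ Ω ∧
      ∀ x ∈ Ω, x ∉ G.componentBoundary Ω w → G.LinkedVia Ω W' x u' ∧ G.LinkedVia Ω W' x v' := by
  induction hn : Wᶜ.ncard using Nat.strong_induction_on generalizing W u v with
  | _ n ih =>
  obtain ⟨w, huw, hvw⟩ := hΩ hu hv huv fun h => hlink (Or.inl h)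
  by_cases hgood : ∀ x ∈ Ω, x ∉ G.componentBoundary Ω w →
      G.LinkedVia Ω W x u ∧ G.LinkedVia Ω W x v
  · exact ⟨W, u, v, w, hu, hv, huv, hlink, notMem_of_mem_componentBoundary huw, hgood⟩
  push Not at hgood
  obtain ⟨x, hx, hxw, hbad⟩ := hgood
  have hwW : w ∉ W := fun h => hlink (Or.inr ⟨w, h, huw, hvw⟩)
  have hlt : (insert w W)ᶜ.ncard < n :=
    hn ▸ Set.ncard_lt_ncard (compl_lt_compl_iff_lt.mpr (Set.ssubset_insert hwW))
  by_cases hxu : G.LinkedVia Ω W x u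
  · exact ih _ hlt (insert w W) hx hv (fun h => hxw (h ▸ hvw))
      (not_linkedVia_insert (hbad hxu) hxw) rfl
  · exact ih _ hlt (insert w W) hx hu (fun h => hxw (h ▸ huw)) (not_linkedVia_insert hxu hxw) rfl

theorem exists_forall_linkedAvoiding [Finite V] (hΩ : G.IsCliquish Ω) (hG : ¬ G.IsClique Ω) :
    ∃ u v w, u ∈ Ω ∧ v ∈ Ω ∧ u ≠ v ∧ ¬ G.Adj u v ∧ w ∉ Ω ∧
      ∀ x ∈ Ω, x ∉ G.componentBoundary Ω w →
        G.LinkedAvoiding Ω v x u ∧ G.LinkedAvoiding Ω u x v := by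
  obtain ⟨u₀, hu₀, v₀, hv₀, huv₀, hadj₀⟩ : ∃ u ∈ Ω, ∃ v ∈ Ω, u ≠ v ∧ ¬ G.Adj u v := by
    simpa [IsClique, Set.Pairwise] using hG
  obtain ⟨W, u, v, w, hu, hv, huv, hlink, hw, hrest⟩ :=
    hΩ.exists_unlinked_forall_linkedVia ∅ hu₀ hv₀ huv₀ (by simpa [LinkedVia] using hadj₀)
  exact ⟨u, v, w, hu, hv, huv, fun h => hlink (Or.inl h), hw,
    fun x hx hxw => ⟨(hrest x hx hxw).1.linkedAvoiding hlink,
      (hrest x hx hxw).2.linkedAvoiding fun h => hlink h.symm⟩⟩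

end IsCliquish

end SimpleGraph

/-- Every potential maximal clique of `G` is either a clique in `G`,
or is contained in the union of two minimal separators of `G`. -/
theorem isPotentialMaxClique_isClique_or_subset_union_minimalSeparators
    {V : Type} [Fintype V] (G : SimpleGraph V) (X : Set V)
    (hX : G.IsPotentialMaxClique X) :
    G.IsClique X ∨
      ∃ S T : Set V, G.IsMinimalSeparator S ∧ G.IsMinimalSeparator T ∧ X ⊆ S ∪ T := by
  obtain ⟨H, hmin, hclq, hmax⟩ := hX
  by_cases hG : G.IsClique X
  · exact Or.inl hG
  have hcl := hmin.isCliquish hclq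
  obtain ⟨u, v, w, hu, hv, huv, hadj, hw, hlink⟩ := hcl.exists_forall_linkedAvoiding hG
  obtain ⟨hGH, hH, -⟩ := id hmin
  obtain ⟨z, hz, hzw⟩ := hH.exists_notMem_componentBoundary hGH hclq hmax hw
  obtain ⟨T, hT, hXT⟩ := exists_isMinimalSeparator_forall_linkedAvoiding hu hv huv hadj
  refine Or.inr ⟨_, T, hcl.isMinimalSeparator_componentBoundary hw hz hzw, hT, fun x hx => ?_⟩
  by_cases hxw : x ∈ G.componentBoundary X w
  · exact Or.inl hxw
  · exact Or.inr (hXT x hx (hlink x hx hxw).1 (hlink x hx hxw).2)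
end

section
/- Let G be a graph, let G' be an induced subgraph of G, and let S' be a minimal separator in G'. Then there exists a minimal separator S in G such that S' ⊆ S. -/
open SimpleGraph

/-! ## Common definitions -/

variable {V : Type} {W : Type}

/-!
Every vertex outside `A` may be added to `S'`: `S' ∪ (V ∖ A)` separates `u` and `v` in `G`, so
by Zorn's lemma it contains a minimal `u,v`-separator `S` of `G`. The trace of `S` on `A` still
separates `u` and `v` in `G[A]` and lies inside `S'`, so by minimality of `S'` it is all of `S'`.
-/

theorem IsChain.exists_forall_notMem {α : Type*} {c : Set (Set α)} (hc : IsChain (· ⊆ ·) c)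
    (hne : c.Nonempty) (l : List α) (h : ∀ x ∈ l, ∃ T ∈ c, x ∉ T) :
    ∃ T ∈ c, ∀ x ∈ l, x ∉ T := by
  induction l with
  | nil => obtain ⟨T, hT⟩ := hne; exact ⟨T, hT, by simp⟩
  | cons x l ih =>
    obtain ⟨T₁, hT₁, hx⟩ := h x List.mem_cons_self
    obtain ⟨T₂, hT₂, hl⟩ := ih fun y hy => h y (List.mem_cons_of_mem x hy)
    rcases hc.total hT₁ hT₂ with h₁₂ | h₂₁
    · exact ⟨T₁, hT₁, by simpa using ⟨hx, fun y hy hyT => hl y hy (h₁₂ hyT)⟩⟩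
    · exact ⟨T₂, hT₂, by simpa using ⟨fun hxT => hx (h₂₁ hxT), hl⟩⟩

namespace SimpleGraph

variable {G : SimpleGraph V} {u v : V}

/-- Walks are finite, so a walk avoiding `⋂₀ c` already avoids a single member of the chain. -/
theorem IsSeparator.sInter {c : Set (Set V)} (hc : IsChain (· ⊆ ·) c) (hne : c.Nonempty)
    (h : ∀ T ∈ c, G.IsSeparator u v T) : G.IsSeparator u v (⋂₀ c) := by
  obtain ⟨T₀, hT₀⟩ := hne
  refine ⟨fun hu => (h T₀ hT₀).1 (hu T₀ hT₀), fun hv => (h T₀ hT₀).2.1 (hv T₀ hT₀), fun p => ?_⟩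
  by_contra! hp
  have hout : ∀ x ∈ p.support, ∃ T ∈ c, x ∉ T := by
    intro x hx
    simpa [Set.mem_sInter] using hp x hx
  obtain ⟨T, hT, hpT⟩ := hc.exists_forall_notMem ⟨T₀, hT₀⟩ p.support hout
  obtain ⟨x, hx, hxT⟩ := (h T hT).2.2 p
  exact hpT x hx hxT

theorem IsSeparator.exists_minimal_subset {S : Set V} (hS : G.IsSeparator u v S) :
    ∃ T ⊆ S, Minimal (G.IsSeparator u v) T :=
  zorn_superset_nonempty {T | G.IsSeparator u v T}
    (fun c hcS hc hne => ⟨⋂₀ c, IsSeparator.sInter hc hne hcS, fun _ => Set.sInter_subset_of_mem⟩)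
    S hS

theorem isMinimalSeparator_of_minimal {S : Set V} (huv : u ≠ v) (hadj : ¬ G.Adj u v)
    (hS : Minimal (G.IsSeparator u v) S) : G.IsMinimalSeparator S :=
  ⟨u, v, huv, hadj, hS.prop, fun _ hT hTsep => hT.not_subset (hS.le_of_le hTsep hT.subset)⟩

theorem IsSeparator.comap {H : SimpleGraph W} (f : H →g G) {a b : W} {S : Set V}
    (hS : G.IsSeparator (f a) (f b) S) : H.IsSeparator a b (f ⁻¹' S) := by
  refine ⟨hS.1, hS.2.1, fun p => ?_⟩
  obtain ⟨x, hx, hxS⟩ := hS.2.2 (p.map f)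
  rw [Walk.support_map, List.mem_map] at hx
  obtain ⟨y, hy, rfl⟩ := hx
  exact ⟨y, hy, hxS⟩

theorem IsSeparator.image_val_union_compl {A : Set V} {a b : A} {S : Set A}
    (hS : (G.induce A).IsSeparator a b S) : G.IsSeparator a b (Subtype.val '' S ∪ Aᶜ) := by
  have notMem_of_notMem {c : A} (hc : c ∉ S) : (c : V) ∉ Subtype.val '' S ∪ Aᶜ := by
    rintro (⟨d, hd, hdc⟩ | hcA)
    · exact hc (Subtype.val_injective hdc ▸ hd)
    · exact hcA c.2
  refine ⟨notMem_of_notMem hS.1, notMem_of_notMem hS.2.1, fun p => ?_⟩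
  by_cases hpA : ∀ x ∈ p.support, x ∈ A
  · obtain ⟨x, hx, hxS⟩ := hS.2.2 (p.induce A hpA)
    rw [Walk.support_induce, List.mem_attachWith] at hx
    exact ⟨x, hx, Or.inl ⟨x, hxS, rfl⟩⟩
  · obtain ⟨x, hx, hxA⟩ := not_forall₂.mp hpA
    exact ⟨x, hx, Or.inr hxA⟩

end SimpleGraph

theorem exists_minimalSeparator_superset_of_induce_general
    {V : Type} (G : SimpleGraph V) (A : Set V) (S' : Set A)
    (hS' : (G.induce A).IsMinimalSeparator S') :
    ∃ S : Set V, G.IsMinimalSeparator S ∧ (Subtype.val '' S') ⊆ S := by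
  obtain ⟨a, b, hab, hadj, hsep, hmin⟩ := hS'
  obtain ⟨S, hSsub, hS⟩ := hsep.image_val_union_compl.exists_minimal_subset
  refine ⟨S, isMinimalSeparator_of_minimal (Subtype.val_injective.ne hab) hadj hS, ?_⟩
  have htrace_sub : Subtype.val ⁻¹' S ⊆ S' := fun x hx => by
    rcases hSsub hx with ⟨y, hy, hyx⟩ | hxA
    · exact Subtype.val_injective hyx ▸ hy
    · exact absurd x.2 hxA
  have htrace_sep : (G.induce A).IsSeparator a b (Subtype.val ⁻¹' S) :=
    hS.prop.comap (Embedding.induce A).toHom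
  have htrace : Subtype.val ⁻¹' S = S' := by
    by_contra hne
    exact hmin _ (htrace_sub.ssubset_of_ne hne) htrace_sep
  rw [← htrace]
  exact Set.image_preimage_subset _ _

/-- If `G'` is an induced subgraph of `G` (induced on a set `A`) and
`S'` is a minimal separator of `G'`, then some minimal separator `S` of `G`
contains `S'`. -/
theorem exists_minimalSeparator_superset_of_induce
    {V : Type} [Fintype V] (G : SimpleGraph V) (A : Set V) (S' : Set A)
    (hS' : (G.induce A).IsMinimalSeparator S') :
    ∃ S : Set V, G.IsMinimalSeparator S ∧ (Subtype.val '' S') ⊆ S :=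
  exists_minimalSeparator_superset_of_induce_general G A S' hS'
end

section
/- The tree-independence number of any block-cactus graph is at most 2. -/
open SimpleGraph

/-! ## Common definitions -/

variable {V : Type} {W : Type}

/-- A graph has no cut-vertex: deleting any single vertex leaves a preconnected graph. -/
def SimpleGraph.HasNoCutVertex {α : Type} (H : SimpleGraph α) : Prop :=
  ∀ v : α, (H.induce {u | u ≠ v}).Preconnected

/-- A block of `G`: a maximal connected subgraph of `G` without a cut-vertex. -/
def SimpleGraph.IsBlock {V : Type} (G : SimpleGraph V) (B : G.Subgraph) : Prop :=
  B.coe.Connected ∧ B.coe.HasNoCutVertex ∧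
    ∀ B' : G.Subgraph, B ≤ B' → B'.coe.Connected → B'.coe.HasNoCutVertex → B' = B


/-!
Induction on the number of vertices. An induced subgraph without a cut-vertex lies inside a block,
and blocks are induced subgraphs, so it is an induced subgraph of a cycle, which has the fan
decomposition with bags `{0, i, i + 1}` along a path, or of a complete graph, whose single bag has
independence number one. Any other graph has a separation `(A, B)` with `|A ∩ B| ≤ 1`, coming from
a cut-vertex or a disconnection; decompositions of `G[A]` and `G[B]` are joined by an edge between
two nodes whose bags contain `A ∩ B`, which keeps the bags' independence numbers.
-/

namespace SimpleGraph

variable {G : SimpleGraph V} {H : SimpleGraph W}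

lemma exists_eq_inl_of_reachable_inl {a : V} {x : V ⊕ W} (h : (G ⊕g H).Reachable (.inl a) x) :
    ∃ b, x = .inl b := by
  cases x with
  | inl b => exact ⟨b, rfl⟩
  | inr w => exact absurd h (not_reachable_sum_inl_inr a w)

lemma exists_eq_inr_of_reachable_inr {a : W} {x : V ⊕ W} (h : (G ⊕g H).Reachable (.inr a) x) :
    ∃ b, x = .inr b := by
  cases x with
  | inl v => exact absurd h.symm (not_reachable_sum_inl_inr v a)
  | inr b => exact ⟨b, rfl⟩

/-- A cycle in `G ⊕g H` is connected, so it lies entirely in `G` or entirely in `H`. -/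
theorem IsAcyclic.sum (hG : G.IsAcyclic) (hH : H.IsAcyclic) : (G ⊕g H).IsAcyclic := by
  rw [isAcyclic_iff_free_cycleGraph] at hG hH ⊢
  rintro n hn ⟨f⟩
  obtain ⟨m, rfl⟩ : ∃ m, n = m + 1 := ⟨n - 1, by omega⟩
  have hreach (i) : (G ⊕g H).Reachable (f 0) (f i) :=
    (cycleGraph_connected.preconnected 0 i).map f.toHom
  cases h0 : f 0 with
  | inl a =>
    choose g hg using fun i => exists_eq_inl_of_reachable_inl (h0 ▸ hreach i)
    refine hG _ hn ⟨⟨g, fun hij => ?_⟩, fun i j hij => f.injective ?_⟩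
    · simpa [hg] using f.toHom.map_adj hij
    · rw [f.coe_toHom, hg, hg]; exact congrArg _ hij
  | inr a =>
    choose g hg using fun i => exists_eq_inr_of_reachable_inr (h0 ▸ hreach i)
    refine hH _ hn ⟨⟨g, fun hij => ?_⟩, fun i j hij => f.injective ?_⟩
    · simpa [hg] using f.toHom.map_adj hij
    · rw [f.coe_toHom, hg, hg]; exact congrArg _ hij

theorem IsTree.sum_sup_edge (hG : G.IsTree) (hH : H.IsTree) (v : V) (w : W) :
    ((G ⊕g H) ⊔ edge (.inl v) (.inr w)).IsTree :=
  ⟨hG.connected.sum_sup_edge hH.connected,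
    (hG.isAcyclic.sum hH.isAcyclic).sup_edge_of_not_reachable (not_reachable_sum_inl_inr _ _)⟩

/-- A walk from `a` to its cover `b` has to leave `Set.Iic a`, and the only edge doing so is
`s(a, b)`. -/
theorem isAcyclic_hasse {α : Type} [LinearOrder α] : (hasse α).IsAcyclic := by
  have key {a b : α} (hab : a ⋖ b) : (hasse α).IsBridge s(a, b) := by
    refine isBridge_iff_forall_walk_mem_edges.2 fun p => ?_
    obtain ⟨d, hd, hda, hdb⟩ := p.exists_boundary_dart (Set.Iic a) le_rfl (not_le.2 hab.lt)
    rw [Set.mem_Iic] at hda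
    rw [Set.mem_Iic, not_le] at hdb
    rcases d.adj with h | h
    · have hfst : d.fst = a := hda.eq_of_not_lt fun hlt => h.2 hlt hdb
      have hsnd : d.snd = b := (hfst ▸ h).unique_right hab
      rw [Walk.edges_eq_map_darts]
      exact List.mem_map.2 ⟨d, hd, by rw [Dart.edge, Sym2.mk, ← hfst, ← hsnd]⟩
    · exact absurd (h.lt.trans_le hda) (not_lt.2 hdb.le)
  rw [isAcyclic_iff_forall_adj_isBridge]
  rintro v w (h | h)
  exacts [key h, Sym2.eq_swap ▸ key h]

lemma isTree_pathGraph (n : ℕ) : (pathGraph (n + 1)).IsTree :=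
  ⟨pathGraph_connected n, isAcyclic_hasse⟩

lemma Preconnected.induce_image {s : Set V} (h : (G.induce s).Preconnected) (f : G →g H) :
    (H.induce (f '' s)).Preconnected :=
  h.map (induceHom f (Set.mapsTo_image f s))
    ((Set.MapsTo.restrict_surjective_iff (Set.mapsTo_image f s)).2 (Set.surjOn_image f s))

lemma preconnected_induce_sum_sup_edge {ι₁ ι₂ : Type} {T₁ : SimpleGraph ι₁}
    {T₂ : SimpleGraph ι₂} {t₁ : ι₁} {t₂ : ι₂} {S₁ : Set ι₁} {S₂ : Set ι₂}
    (h₁ : (T₁.induce S₁).Preconnected) (h₂ : (T₂.induce S₂).Preconnected)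
    (hjoin : S₁.Nonempty → S₂.Nonempty → t₁ ∈ S₁ ∧ t₂ ∈ S₂) :
    (((T₁ ⊕g T₂) ⊔ edge (.inl t₁) (.inr t₂)).induce (.inl '' S₁ ∪ .inr '' S₂)).Preconnected := by
  set T := (T₁ ⊕g T₂) ⊔ edge (.inl t₁) (.inr t₂)
  have hl := h₁.induce_image ((Hom.ofLE le_sup_left : T₁ ⊕g T₂ →g T).comp Embedding.sumInl.toHom)
  have hr := h₂.induce_image ((Hom.ofLE le_sup_left : T₁ ⊕g T₂ →g T).comp Embedding.sumInr.toHom)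
  rcases S₁.eq_empty_or_nonempty with rfl | hne₁
  · rw [Set.image_empty, Set.empty_union]; exact hr
  rcases S₂.eq_empty_or_nonempty with rfl | hne₂
  · rw [Set.image_empty, Set.union_empty]; exact hl
  obtain ⟨ht₁, ht₂⟩ := hjoin hne₁ hne₂
  exact (connected_induce_union hl hr ⟨t₁, ht₁, rfl⟩ ⟨t₂, ht₂, rfl⟩
    (Or.inr (by simp [edge_adj]))).preconnected

lemma Embedding.isIndepSet_image_iff (f : H ↪g G) {s : Set W} : G.IsIndepSet (f '' s) ↔ H.IsIndepSet s := by
  rw [isIndepSet_iff, f.injective.injOn.pairwise_image]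
  simp only [Set.Pairwise, Function.onFun, f.map_adj_iff]

variable (G) in
structure IsSeparation (A B : Set V) : Prop where
  mem_or_mem : ∀ v, v ∈ A ∨ v ∈ B
  adj_mem : ∀ ⦃u w⦄, G.Adj u w → u ∈ A ∧ w ∈ A ∨ u ∈ B ∧ w ∈ B

namespace TreeDecomp

def IndepBounded (D : G.TreeDecomp) (k : ℕ) : Prop :=
  ∀ t (s : Finset V), ↑s ⊆ D.bag t → G.IsIndepSet s → s.card ≤ k

lemma IndepBounded.treeIndepNum_le {D : G.TreeDecomp} {k : ℕ} (hD : D.IndepBounded k) :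
    G.treeIndepNum ≤ k := by
  refine (iInf_le _ D).trans (iSup_le fun t => ?_)
  have : G.indepNumOn (D.bag t) ≤ k :=
    csSup_le ⟨0, ∅, by simp, by simp, rfl⟩ fun _ ⟨s, hs, hind, hcard⟩ => hcard ▸ hD t s hs hind
  exact_mod_cast this

variable (G) in
def single : G.TreeDecomp where
  ι := Unit
  tree := ⊥
  isTree := .of_subsingleton
  bag _ := Set.univ
  bags_cover_vertices _ := ⟨(), trivial⟩
  bags_cover_edges _ _ _ := ⟨(), trivial, trivial⟩
  bags_connected v := by
    have : Nonempty {t : Unit | v ∈ Set.univ} := ⟨⟨(), trivial⟩⟩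
    exact IsTree.of_subsingleton.connected

lemma indepBounded_single {k : ℕ} (h : ∀ s : Finset V, G.IsIndepSet s → s.card ≤ k) :
    (single G).IndepBounded k :=
  fun _ s _ hs => h s hs

def comap (f : H ↪g G) (D : G.TreeDecomp) : H.TreeDecomp where
  ι := D.ι
  tree := D.tree
  isTree := D.isTree
  bag t := f ⁻¹' D.bag t
  bags_cover_vertices v := D.bags_cover_vertices (f v)
  bags_cover_edges _ _ h := D.bags_cover_edges (f.map_adj_iff.2 h)
  bags_connected v := D.bags_connected (f v)

lemma IndepBounded.comap {D : G.TreeDecomp} {k : ℕ} (hD : D.IndepBounded k) (f : H ↪g G) :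
    (D.comap f).IndepBounded k := by
  intro t s hs hind
  classical
  have := hD t (s.image f) (by rw [Finset.coe_image]; exact Set.image_subset_iff.2 hs)
    (by rw [Finset.coe_image, f.isIndepSet_image_iff]; exact hind)
  rwa [Finset.card_image_of_injective _ f.injective] at this

lemma exists_subset_bag_of_subsingleton (D : G.TreeDecomp) {S : Set V} (hS : S.Subsingleton) :
    ∃ t, S ⊆ D.bag t := by
  rcases hS.eq_empty_or_singleton with rfl | ⟨v, rfl⟩
  · exact ⟨D.isTree.connected.nonempty.some, Set.empty_subset _⟩
  · obtain ⟨t, ht⟩ := D.bags_cover_vertices v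
    exact ⟨t, Set.singleton_subset_iff.2 ht⟩

lemma IndepBounded.card_le_of_subset_image {D : H.TreeDecomp} {k : ℕ} (hD : D.IndepBounded k)
    (f : H ↪g G) {t : D.ι} {s : Finset V} (hs : ↑s ⊆ f '' D.bag t) (hind : G.IsIndepSet s) :
    s.card ≤ k := by
  classical
  obtain ⟨s', hs', rfl⟩ := Finset.subset_set_image_iff.1 hs
  rw [Finset.coe_image, f.isIndepSet_image_iff] at hind
  rw [Finset.card_image_of_injective _ f.injective]
  exact hD t s' hs' hind

def fan (n : ℕ) : (cycleGraph (n + 2)).TreeDecomp where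
  ι := Fin (n + 2)
  tree := pathGraph (n + 2)
  isTree := isTree_pathGraph (n + 1)
  bag i := {0, i, i + 1}
  bags_cover_vertices v := ⟨v, by simp⟩
  bags_cover_edges u w h := by
    rcases cycleGraph_adj.1 h with h | h
    · exact ⟨w, by simp [← h]⟩
    · exact ⟨u, by simp [← h]⟩
  bags_connected v := by
    by_cases hv : v = 0
    · rw [show {i | v ∈ ({0, i, i + 1} : Set _)} = Set.univ from
        Set.eq_univ_of_forall fun _ => Or.inl hv]
      exact (induceUnivIso _).connected_iff.2 (pathGraph_connected _)
    · rw [show {i | v ∈ ({0, i, i + 1} : Set _)} = {v - 1, v} by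
        ext i; simp [hv, eq_sub_iff_add_eq, eq_comm, or_comm]]
      refine induce_pair_connected_of_adj (pathGraph_adj.2 (Or.inl ?_))
      have := Fin.pos_iff_ne_zero.2 hv
      rw [Fin.coe_sub_one, if_neg hv]
      omega

lemma indepBounded_fan (n : ℕ) : (fan n).IndepBounded 2 := by
  intro (i : Fin (n + 2)) s hs hind
  have hadj : (cycleGraph (n + 2)).Adj i (i + 1) :=
    cycleGraph_adj.2 (Or.inr (add_sub_cancel_left i 1))
  by_cases hi : i ∈ s
  · have : i + 1 ∉ s := fun h => hind hi h hadj.ne hadj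
    refine (Finset.card_le_card (t := {0, i}) fun x hx => ?_).trans Finset.card_le_two
    rcases hs hx with rfl | rfl | rfl <;> simp_all
  · refine (Finset.card_le_card (t := {0, i + 1}) fun x hx => ?_).trans Finset.card_le_two
    rcases hs hx with rfl | rfl | rfl <;> simp_all

lemma preconnected_induce_mem_image_bag {A : Set V} (D : (G.induce A).TreeDecomp) (v : V) :
    (D.tree.induce {t | v ∈ Subtype.val '' D.bag t}).Preconnected := by
  by_cases hv : v ∈ A
  · have : {t | v ∈ Subtype.val '' D.bag t} = {t | ⟨v, hv⟩ ∈ D.bag t} :=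
      Set.ext fun _ => Subtype.val_injective.mem_set_image (a := (⟨v, hv⟩ : A))
    rw [this]
    exact (D.bags_connected ⟨v, hv⟩).preconnected
  · have : {t | v ∈ Subtype.val '' D.bag t} = ∅ :=
      Set.eq_empty_of_forall_notMem fun _ ⟨x, _, hx⟩ => hv (hx ▸ x.2)
    rw [this]
    exact fun x => x.2.elim

section Glue

variable {A B : Set V} (D₁ : (G.induce A).TreeDecomp) (D₂ : (G.induce B).TreeDecomp)

def glueBag : D₁.ι ⊕ D₂.ι → Set V :=
  Sum.elim (fun t => Subtype.val '' D₁.bag t) (fun t => Subtype.val '' D₂.bag t)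

lemma setOf_mem_glueBag (v : V) : {t | v ∈ glueBag D₁ D₂ t} =
    .inl '' {t | v ∈ Subtype.val '' D₁.bag t} ∪ .inr '' {t | v ∈ Subtype.val '' D₂.bag t} := by
  ext (t | t) <;> simp [glueBag]

variable {D₁ D₂}

lemma exists_mem_glueBag (hAB : G.IsSeparation A B) (v : V) : ∃ t, v ∈ glueBag D₁ D₂ t := by
  rcases hAB.mem_or_mem v with hv | hv
  · obtain ⟨t, ht⟩ := D₁.bags_cover_vertices ⟨v, hv⟩
    exact ⟨.inl t, _, ht, rfl⟩
  · obtain ⟨t, ht⟩ := D₂.bags_cover_vertices ⟨v, hv⟩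
    exact ⟨.inr t, _, ht, rfl⟩

/-- `h₁` and `h₂` say that the bags at `t₁` and `t₂` contain `A ∩ B`. -/
def glue (hAB : G.IsSeparation A B) {t₁ : D₁.ι} {t₂ : D₂.ι} (h₁ : Subtype.val ⁻¹' B ⊆ D₁.bag t₁)
    (h₂ : Subtype.val ⁻¹' A ⊆ D₂.bag t₂) : G.TreeDecomp where
  ι := D₁.ι ⊕ D₂.ι
  tree := (D₁.tree ⊕g D₂.tree) ⊔ edge (.inl t₁) (.inr t₂)
  isTree := D₁.isTree.sum_sup_edge D₂.isTree t₁ t₂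
  bag := glueBag D₁ D₂
  bags_cover_vertices := exists_mem_glueBag hAB
  bags_cover_edges u w huw := by
    rcases hAB.adj_mem huw with ⟨hu, hw⟩ | ⟨hu, hw⟩
    · obtain ⟨t, htu, htw⟩ := D₁.bags_cover_edges (u := ⟨u, hu⟩) (v := ⟨w, hw⟩) huw
      exact ⟨.inl t, ⟨_, htu, rfl⟩, ⟨_, htw, rfl⟩⟩
    · obtain ⟨t, htu, htw⟩ := D₂.bags_cover_edges (u := ⟨u, hu⟩) (v := ⟨w, hw⟩) huw
      exact ⟨.inr t, ⟨_, htu, rfl⟩, ⟨_, htw, rfl⟩⟩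
  bags_connected v := by
    have : Nonempty {t | v ∈ glueBag D₁ D₂ t} :=
      let ⟨t, ht⟩ := exists_mem_glueBag hAB v; ⟨⟨t, ht⟩⟩
    refine ⟨?_⟩
    rw [setOf_mem_glueBag]
    refine preconnected_induce_sum_sup_edge (preconnected_induce_mem_image_bag D₁ v)
      (preconnected_induce_mem_image_bag D₂ v) ?_
    rintro ⟨_, ⟨x, hx, rfl⟩⟩ ⟨_, ⟨y, hy, hxy⟩⟩
    exact ⟨⟨x, h₁ (show (x : V) ∈ B from hxy ▸ y.2), rfl⟩,
      ⟨y, h₂ (show (y : V) ∈ A from hxy ▸ x.2), hxy⟩⟩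

lemma IndepBounded.glue {k : ℕ} (hD₁ : D₁.IndepBounded k) (hD₂ : D₂.IndepBounded k)
    (hAB : G.IsSeparation A B) {t₁ : D₁.ι} {t₂ : D₂.ι} (h₁ : Subtype.val ⁻¹' B ⊆ D₁.bag t₁)
    (h₂ : Subtype.val ⁻¹' A ⊆ D₂.bag t₂) : (glue hAB h₁ h₂).IndepBounded k := by
  rintro (t | t) s hs hind
  exacts [hD₁.card_le_of_subset_image (Embedding.induce A) hs hind,
    hD₂.card_le_of_subset_image (Embedding.induce B) hs hind]

end Glue

end TreeDecomp

open TreeDecomp in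
lemma IsSeparation.exists_indepBounded {A B : Set V} {k : ℕ}
    (hAB : G.IsSeparation A B) (hAB₁ : (A ∩ B).Subsingleton)
    (hA : ∃ D : (G.induce A).TreeDecomp, D.IndepBounded k)
    (hB : ∃ D : (G.induce B).TreeDecomp, D.IndepBounded k) :
    ∃ D : G.TreeDecomp, D.IndepBounded k := by
  obtain ⟨D₁, hD₁⟩ := hA
  obtain ⟨D₂, hD₂⟩ := hB
  obtain ⟨t₁, ht₁⟩ := D₁.exists_subset_bag_of_subsingleton
    ((hAB₁.preimage Subtype.val_injective).anti fun x hx => ⟨x.2, hx⟩)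
  obtain ⟨t₂, ht₂⟩ := D₂.exists_subset_bag_of_subsingleton
    ((hAB₁.preimage Subtype.val_injective).anti fun x hx => ⟨hx, x.2⟩)
  exact ⟨glue hAB ht₁ ht₂, hD₁.glue hD₂ hAB ht₁ ht₂⟩

/-- `A` is `S` together with everything reachable from `x` without meeting `S`, and `B` is the
rest, so `A ∩ B ⊆ S`. -/
lemma IsSeparator.exists_isSeparation {x y : V} {S : Set V} (h : G.IsSeparator x y S) :
    ∃ A B, G.IsSeparation A B ∧ A ∩ B ⊆ S ∧ y ∉ A ∧ x ∉ B := by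
  set R := {u | ∃ p : G.Walk x u, ∀ z ∈ p.support, z ∉ S}
  have hR : ∀ ⦃u w⦄, G.Adj u w → u ∈ R → w ∉ S → w ∈ R := by
    rintro u w huw ⟨p, hp⟩ hw
    refine ⟨p.concat huw, fun z hz => ?_⟩
    simp only [Walk.support_concat, List.mem_append, List.mem_singleton] at hz
    exact hz.elim (hp z) (· ▸ hw)
  refine ⟨R ∪ S, Rᶜ, ⟨fun v => ?_, fun u w huw => ?_⟩, ?_, ?_, ?_⟩
  · by_cases hv : v ∈ R
    exacts [Or.inl (Or.inl hv), Or.inr hv]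
  · by_cases hu : u ∈ R
    · by_cases hw : w ∈ S
      exacts [Or.inl ⟨Or.inl hu, Or.inr hw⟩, Or.inl ⟨Or.inl hu, Or.inl (hR huw hu hw)⟩]
    · by_cases hw : w ∈ R
      · refine Or.inl ⟨Or.inr ?_, Or.inl hw⟩
        by_contra hu'
        exact hu (hR huw.symm hw hu')
      · exact Or.inr ⟨hu, hw⟩
  · rintro v ⟨hv | hv, hv'⟩
    exacts [absurd hv hv', hv]
  · rintro (⟨p, hp⟩ | hy)
    · obtain ⟨z, hz, hzS⟩ := h.2.2 p
      exact hp z hz hzS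
    · exact h.2.1 hy
  · exact fun hx => hx ⟨.nil, by simpa using h.1⟩

lemma exists_isSeparator_of_not_connected_and_hasNoCutVertex [Nonempty V]
    (h : ¬(G.Connected ∧ G.HasNoCutVertex)) :
    ∃ x y S, S.Subsingleton ∧ G.IsSeparator x y S := by
  by_cases hpre : G.Preconnected
  · have : ¬G.HasNoCutVertex := fun hnc => h ⟨⟨hpre⟩, hnc⟩
    simp only [HasNoCutVertex, Preconnected, not_forall] at this
    obtain ⟨v, ⟨x, hx⟩, ⟨y, hy⟩, hxy⟩ := this
    refine ⟨x, y, {v}, Set.subsingleton_singleton, hx, hy, fun p => ?_⟩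
    by_contra! hp
    exact hxy ⟨p.induce {u | u ≠ v} hp⟩
  · simp only [Preconnected, not_forall] at hpre
    obtain ⟨x, y, hxy⟩ := hpre
    exact ⟨x, y, ∅, Set.subsingleton_empty, id, id, fun p => absurd ⟨p⟩ hxy⟩

open TreeDecomp in
theorem exists_indepBounded_of_forall_nonseparable_embedding [Finite V] {k : ℕ}
    (h : ∀ (U : Type) (K : SimpleGraph U), K.Connected → K.HasNoCutVertex → (K ↪g G) →
      ∃ D : K.TreeDecomp, D.IndepBounded k) :
    ∃ D : G.TreeDecomp, D.IndepBounded k := by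
  induction hn : Nat.card V using Nat.strong_induction_on generalizing V with
  | _ n ih =>
  rcases isEmpty_or_nonempty V with hV | hV
  · exact ⟨single G, indepBounded_single fun s _ => by simp [Finset.eq_empty_of_isEmpty s]⟩
  by_cases hG : G.Connected ∧ G.HasNoCutVertex
  · exact h V G hG.1 hG.2 .refl
  obtain ⟨x, y, S, hS, hxy⟩ := exists_isSeparator_of_not_connected_and_hasNoCutVertex hG
  obtain ⟨A, B, hAB, hABS, hyA, hxB⟩ := hxy.exists_isSeparation
  have side (A' : Set V) (z : V) (hz : z ∉ A') :
      ∃ D : (G.induce A').TreeDecomp, D.IndepBounded k :=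
    ih _ (hn ▸ Finite.card_subtype_lt hz) (G := G.induce A')
      (fun U K hc hnc f => h U K hc hnc ((Embedding.induce A').comp f)) rfl
  exact hAB.exists_indepBounded (hS.anti hABS) (side A y hyA) (side B x hxB)

lemma HasNoCutVertex.of_iso (e : G ≃g H) (hH : H.HasNoCutVertex) : G.HasNoCutVertex := by
  intro v
  have hs : e.symm.toHom '' {u | u ≠ e v} = {u | u ≠ v} := by
    ext u
    simp [e.symm_apply_eq, eq_comm]
  exact hs ▸ Preconnected.induce_image (hH (e v)) e.symm.toHom

lemma exists_le_isBlock [Finite V] {B : G.Subgraph} (hc : B.coe.Connected)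
    (hnc : B.coe.HasNoCutVertex) : ∃ C, B ≤ C ∧ G.IsBlock C := by
  obtain ⟨C, hBC, hC⟩ := Finite.exists_le_maximal
    (p := fun C : G.Subgraph => C.coe.Connected ∧ C.coe.HasNoCutVertex) ⟨hc, hnc⟩
  exact ⟨C, hBC, hC.1.1, hC.1.2, fun B' hCB' hc' hnc' => le_antisymm (hC.2 ⟨hc', hnc'⟩ hCB') hCB'⟩

/-- Adding edges between vertices of a block keeps it connected and without a cut-vertex, so by
maximality a block is an induced subgraph. -/
lemma IsBlock.isInduced {C : G.Subgraph} (hC : G.IsBlock C) : C.IsInduced := by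
  have hle : C ≤ (⊤ : G.Subgraph).induce C.verts := Subgraph.le_induce_top_verts
  have hcoe : C.coe ≤ ((⊤ : G.Subgraph).induce C.verts).coe := fun _ _ h => hle.2 h
  have heq := hC.2.2 _ hle (hC.1.mono hcoe)
    fun v => (hC.2.1 v).mono fun _ _ h => hcoe h
  rw [← heq]
  exact (Subgraph.isInduced_iff_exists_eq_induce_top _).2 ⟨_, rfl⟩

variable (G) in
def IsBlockCactus : Prop :=
  ∀ B : G.Subgraph, G.IsBlock B →
    (∃ n : ℕ, 3 ≤ n ∧ Nonempty (B.coe ≃g cycleGraph n)) ∨ (∀ u v : B.verts, u ≠ v → B.coe.Adj u v)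

open TreeDecomp in
lemma IsBlockCactus.exists_indepBounded_two [Finite V] (hG : G.IsBlockCactus)
    (hc : H.Connected) (hnc : H.HasNoCutVertex) (f : H ↪g G) :
    ∃ D : H.TreeDecomp, D.IndepBounded 2 := by
  let e := f.toCopy.isoToSubgraph
  obtain ⟨C, hfC, hC⟩ := exists_le_isBlock (e.connected_iff.1 hc) (hnc.of_iso e.symm)
  let g : H ↪g C.coe :=
    { toFun w := ⟨f w, hfC.1 ⟨w, trivial, rfl⟩⟩
      inj' _ _ h := f.injective (congrArg Subtype.val h)
      map_rel_iff' := hC.isInduced.adj.trans f.map_adj_iff }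
  rcases hG C hC with ⟨n, hn, ⟨c⟩⟩ | hcl
  · obtain ⟨m, rfl⟩ : ∃ m, n = m + 2 := ⟨n - 2, by omega⟩
    exact ⟨(fan m).comap (c.toEmbedding.comp g), (indepBounded_fan m).comap _⟩
  · refine ⟨single H, indepBounded_single fun s hs => ?_⟩
    have : s.card ≤ 1 := Finset.card_le_one.2 fun a ha b hb => by_contra fun hab =>
      hs ha hb hab (g.map_adj_iff.1 (hcl _ _ (g.injective.ne hab)))
    omega

end SimpleGraph

/-- The tree-independence number of any block-cactus graph
(a graph each of whose blocks is a cycle or a complete graph) is at most `2`. -/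
theorem treeIndepNum_le_two_of_blockCactus {V : Type} [Fintype V] (G : SimpleGraph V)
    (hG : ∀ B : G.Subgraph, G.IsBlock B →
      (∃ n : ℕ, 3 ≤ n ∧ Nonempty (B.coe ≃g cycleGraph n)) ∨
      (∀ u v : B.verts, u ≠ v → B.coe.Adj u v)) :
    G.treeIndepNum ≤ 2 := by
  obtain ⟨D, hD⟩ := exists_indepBounded_of_forall_nonseparable_embedding fun _ _ hc hnc f =>
    IsBlockCactus.exists_indepBounded_two hG hc hnc f
  exact hD.treeIndepNum_le
end
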